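/- arXiv:0805.0965 — 12 statements merged into one kernel-verified Lean document; each statement's English description precedes it below -/
import Mathlib

section
/- In the quotient ring ℚ[χ]/⟨1+χ+⋯+χ^{N-1}⟩ with N = 2^K, for any odd natural number k the element 1-χ^k is invertible, with inverse -(1/N)·(1 + 2χ^k + 3χ^{2k} + ⋯ + N·χ^{(N-1)k}). -/
open Polynomial Finset Function

/-!
Let `x` be the class of `χ`. The relation `∑_{i<N} x^i = 0` forces `x^N = 1`, so `n ↦ x^n` is
`N`-periodic; as `k` is prime to `N`, `j ↦ jk` permutes the residues mod `N`, hence `y = x^k`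
again satisfies `∑_{j<N} y^j = 0` and `y^N = 1`. Telescoping then gives
`(1 - y) ∑_{j<N} (j+1) y^j = ∑_{j<N} y^j - N y^N = -N`.
-/

theorem Function.Periodic.sum_range_comp_mul_of_coprime {M : Type*} [AddCommMonoid M]
    {f : ℕ → M} {N k : ℕ} (hf : Periodic f N) (hk : k.Coprime N) :
    ∑ j ∈ range N, f (j * k) = ∑ j ∈ range N, f j := by
  rcases N.eq_zero_or_pos with rfl | hN
  · simp
  refine sum_nbij (· * k % N) (fun j _ ↦ mem_range.2 (Nat.mod_lt _ hN)) ?_ ?_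
    (fun j _ ↦ (hf.map_mod_nat _).symm)
  · intro a ha b hb hab
    exact (Nat.ModEq.cancel_right_of_coprime hk.symm hab).eq_of_lt_of_lt
      (mem_range.1 ha) (mem_range.1 hb)
  · intro i hi
    obtain ⟨m, hm, hkm⟩ := Nat.exists_mul_mod_eq_of_coprime i hk hN.ne'
    refine ⟨m, mem_range.2 hm, ?_⟩
    simpa only [mul_comm k, Nat.mod_eq_of_lt (mem_range.1 hi)] using hkm

section CommRing

variable {R : Type*} [CommRing R]

theorem pow_eq_one_of_geom_sum_eq_zero {x : R} {n : ℕ} (hx : ∑ i ∈ range n, x ^ i = 0) :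
    x ^ n = 1 := by
  rw [← sub_eq_zero, ← geom_sum_mul, hx, zero_mul]

theorem geom_sum_pow_eq_zero_of_coprime {x : R} {n k : ℕ} (hx : ∑ i ∈ range n, x ^ i = 0)
    (hk : k.Coprime n) : ∑ j ∈ range n, (x ^ k) ^ j = 0 := by
  have hper : Periodic (x ^ ·) n := fun m ↦ by
    simp only [pow_add, pow_eq_one_of_geom_sum_eq_zero hx, mul_one]
  simp_rw [← pow_mul, mul_comm k]
  rw [hper.sum_range_comp_mul_of_coprime hk, hx]

theorem one_sub_mul_sum_range_succ_mul_pow (y : R) (n : ℕ) :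
    (1 - y) * ∑ j ∈ range n, ((j : R) + 1) * y ^ j = ∑ j ∈ range n, y ^ j - n * y ^ n := by
  induction n with
  | zero => simp
  | succ n ih =>
    rw [sum_range_succ, sum_range_succ (fun j ↦ y ^ j), mul_add, ih]
    push_cast
    ring

theorem one_sub_mul_sum_range_succ_mul_pow_of_geom_sum_eq_zero {y : R} {n : ℕ}
    (hy : ∑ j ∈ range n, y ^ j = 0) :
    (1 - y) * ∑ j ∈ range n, ((j : R) + 1) * y ^ j = -n := by
  rw [one_sub_mul_sum_range_succ_mul_pow, hy, pow_eq_one_of_geom_sum_eq_zero hy]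
  ring

end CommRing

theorem stmt0_general (K : ℕ) (k : ℕ) (hk : Odd k) :
    (Ideal.Quotient.mk (Ideal.span {(∑ i ∈ Finset.range (2 ^ K), X ^ i : Polynomial ℚ)})
        (1 - X ^ k)) *
      (Ideal.Quotient.mk (Ideal.span {(∑ i ∈ Finset.range (2 ^ K), X ^ i : Polynomial ℚ)})
        (C (-(1 / ((2 ^ K : ℕ) : ℚ))) *
          ∑ j ∈ Finset.range (2 ^ K), C ((j : ℚ) + 1) * X ^ (j * k))) = 1 := by
  set I := Ideal.span {(∑ i ∈ Finset.range (2 ^ K), X ^ i : Polynomial ℚ)}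
  have hgeom : ∑ i ∈ range (2 ^ K), Ideal.Quotient.mk I (X : ℚ[X]) ^ i = 0 := by
    rw [← RingHom.map_geom_sum, Ideal.Quotient.eq_zero_iff_mem]
    exact Ideal.mem_span_singleton_self _
  have hcop : k.Coprime (2 ^ K) := (Nat.coprime_two_right.2 hk).pow_right K
  have hmul := one_sub_mul_sum_range_succ_mul_pow_of_geom_sum_eq_zero
    (geom_sum_pow_eq_zero_of_coprime hgeom hcop)
  have hN : -(1 / ((2 ^ K : ℕ) : ℚ)) * -((2 ^ K : ℕ) : ℚ) = 1 := by field_simp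
  simp only [map_mul, map_sub, map_one, map_pow, map_sum, map_add, map_natCast, mul_comm _ k,
    pow_mul]
  rw [mul_left_comm, hmul, ← map_natCast (Ideal.Quotient.mk I), ← map_natCast C, ← map_neg,
    ← map_neg, ← map_mul, ← map_mul, hN, map_one, map_one]

/-- In ℚ[χ]/⟨1+χ+⋯+χ^{N-1}⟩ with N = 2^K and k odd, 1-χ^k is invertible with inverse
-(1/N)·(1 + 2χ^k + 3χ^{2k} + ⋯ + N·χ^{(N-1)k}). -/
theorem stmt0 (K : ℕ) (hK : 1 ≤ K) (k : ℕ) (hk : Odd k) :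
    (Ideal.Quotient.mk (Ideal.span {(∑ i ∈ Finset.range (2 ^ K), X ^ i : Polynomial ℚ)})
        (1 - X ^ k)) *
      (Ideal.Quotient.mk (Ideal.span {(∑ i ∈ Finset.range (2 ^ K), X ^ i : Polynomial ℚ)})
        (C (-(1 / ((2 ^ K : ℕ) : ℚ))) *
          ∑ j ∈ Finset.range (2 ^ K), C ((j : ℚ) + 1) * X ^ (j * k))) = 1 :=
  stmt0_general K k hk
end

section
/- Chinese remainder decomposition: let N = 2^K and g ∈ ℚ[χ]/⟨1+χ+⋯+χ^{N-1}⟩. If for each 0 ≤ l ≤ K-1 the element g_l ∈ ℚ[χ]/⟨1+χ+⋯+χ^{N-1}⟩ satisfies pr_l(g_l) = pr_l(g), where pr_l is the projection to ℚ[χ]/⟨1+χ^{2^l}⟩, then g = Σ_{l=0}^{K-1} 2^{l-K} · g_l · (1-χ) · ∏_{0≤r≤K-1, r≠l} (1+χ^{2^r}). -/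
/-!
Write `Φ_r = 1 + χ^(2^r)`. Then `1 + χ + ⋯ + χ^(N-1) = ∏_{r<K} Φ_r`, and the `Φ_r` are pairwise
coprime because `Φ_r ≡ 2` modulo `Φ_l` for `l < r` (as `χ^(2^l) ≡ -1`). So it suffices to check
the identity modulo each `Φ_m`. There every summand with `l ≠ m` contains the factor `Φ_m`,
while `(1 - χ) ∏_{r≠m} Φ_r ≡ (1 - χ^(2^m)) · 2^(K-m-1) ≡ 2^(K-m)`, which cancels the
coefficient `2^(m-K)` and leaves `g_m ≡ g`.
-/

open Polynomial Finset

theorem geom_sum_two_pow_eq_prod_one_add_pow_two_pow {S : Type*} [CommSemiring S] (x : S)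
    (K : ℕ) : ∑ i ∈ range (2 ^ K), x ^ i = ∏ r ∈ range K, (1 + x ^ 2 ^ r) := by
  induction K with
  | zero => simp
  | succ K ih =>
    simp only [pow_succ, mul_two, sum_range_add, pow_add, ← mul_sum, prod_range_succ, ← ih]
    ring

section CommRing

variable {A : Type*} [CommRing A]

theorem one_sub_mul_prod_one_add_pow_two_pow (x : A) (m : ℕ) :
    (1 - x) * ∏ r ∈ range m, (1 + x ^ 2 ^ r) = 1 - x ^ 2 ^ m := by
  induction m with
  | zero => simp
  | succ m ih => rw [prod_range_succ, ← mul_assoc, ih, pow_succ, pow_mul]; ring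

theorem one_add_pow_two_pow_eq_two {y : A} {m r : ℕ} (hy : y ^ 2 ^ m = -1) (hmr : m < r) :
    1 + y ^ 2 ^ r = 2 := by
  have hr : 2 ^ r = 2 ^ m * 2 ^ (r - m) := by rw [← pow_add, Nat.add_sub_cancel' hmr.le]
  rw [hr, pow_mul, hy, Even.neg_one_pow (Nat.even_pow.2 ⟨even_two, by omega⟩)]
  norm_num

theorem one_sub_mul_prod_erase_one_add_pow_two_pow {y : A} {m K : ℕ} (hy : y ^ 2 ^ m = -1)
    (hm : m < K) : (1 - y) * ∏ r ∈ (range K).erase m, (1 + y ^ 2 ^ r) = 2 ^ (K - m) := by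
  have hsplit : (range K).erase m = range m ∪ Ico (m + 1) K := by
    ext r; simp only [mem_erase, mem_range, mem_union, mem_Ico]; omega
  have hdisj : Disjoint (range m) (Ico (m + 1) K) :=
    disjoint_left.2 fun r hr hr' => by simp only [mem_range, mem_Ico] at hr hr'; omega
  have hupper : ∏ r ∈ Ico (m + 1) K, (1 + y ^ 2 ^ r) = 2 ^ (K - (m + 1)) := by
    rw [prod_congr rfl fun r hr => one_add_pow_two_pow_eq_two hy (mem_Ico.1 hr).1,
      prod_const, Nat.card_Ico]
  rw [hsplit, prod_union hdisj, ← mul_assoc, one_sub_mul_prod_one_add_pow_two_pow, hy, hupper,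
    show K - m = K - (m + 1) + 1 by omega, pow_succ]
  ring

theorem mk_span_one_add_pow_eq_neg_one (x : A) (n : ℕ) :
    Ideal.Quotient.mk (Ideal.span {1 + x ^ n}) x ^ n = -1 := by
  rw [eq_neg_iff_add_eq_zero, add_comm, ← map_pow, ← map_one (Ideal.Quotient.mk _), ← map_add,
    Ideal.Quotient.eq_zero_iff_mem]
  exact Ideal.mem_span_singleton_self _

theorem isCoprime_one_add_pow_two_pow_of_lt (h2 : IsUnit (2 : A)) (x : A) {l r : ℕ}
    (hlr : l < r) : IsCoprime (1 + x ^ 2 ^ l) (1 + x ^ 2 ^ r) := by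
  have hmk := one_add_pow_two_pow_eq_two (mk_span_one_add_pow_eq_neg_one x (2 ^ l)) hlr
  rw [← map_pow, ← map_one (Ideal.Quotient.mk _), ← map_add, ← map_ofNat (Ideal.Quotient.mk _),
    Ideal.Quotient.mk_eq_mk_iff_sub_mem, Ideal.mem_span_singleton] at hmk
  obtain ⟨d, hd⟩ := hmk
  rw [sub_eq_iff_eq_add'.1 hd]
  exact (isCoprime_one_right.of_isCoprime_of_dvd_right h2.dvd).add_mul_left_right d

theorem pairwise_isCoprime_one_add_pow_two_pow (h2 : IsUnit (2 : A)) (x : A) :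
    Pairwise fun l r : ℕ => IsCoprime (1 + x ^ 2 ^ l) (1 + x ^ 2 ^ r) := by
  intro l r hlr
  rcases hlr.lt_or_gt with hlt | hgt
  · exact isCoprime_one_add_pow_two_pow_of_lt h2 x hlt
  · exact (isCoprime_one_add_pow_two_pow_of_lt h2 x hgt).symm

end CommRing

theorem one_add_X_pow_two_pow_dvd_sub_sum {F : Type*} [Field F] (h2 : (2 : F) ≠ 0) {K m : ℕ}
    (hm : m < K) (g : F[X]) (gl : ℕ → F[X])
    (hg : Ideal.Quotient.mk (Ideal.span {1 + X ^ 2 ^ m}) (gl m) =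
      Ideal.Quotient.mk (Ideal.span {1 + X ^ 2 ^ m}) g) :
    (1 + X ^ 2 ^ m : F[X]) ∣ g - ∑ l ∈ range K,
      C ((2 : F) ^ l / 2 ^ K) * gl l * (1 - X) * ∏ r ∈ (range K).erase l, (1 + X ^ 2 ^ r) := by
  set π := Ideal.Quotient.mk (Ideal.span {(1 + X ^ 2 ^ m : F[X])})
  have hy : π X ^ 2 ^ m = -1 := mk_span_one_add_pow_eq_neg_one X (2 ^ m)
  rw [← Ideal.mem_span_singleton, ← Ideal.Quotient.eq_zero_iff_mem, map_sub, map_sum,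
    sum_eq_single_of_mem m (mem_range.2 hm), sub_eq_zero]
  · simp only [map_mul, map_sub, map_one, map_prod, map_add, map_pow]
    rw [mul_assoc, one_sub_mul_prod_erase_one_add_pow_two_pow hy hm]
    have hc : π (C ((2 : F) ^ m / 2 ^ K)) * 2 ^ (K - m) = 1 := by
      rw [← map_ofNat π 2, ← map_pow, ← map_ofNat C 2, ← map_pow C, ← map_mul, ← C_mul,
        div_mul_eq_mul_div, ← pow_add, Nat.add_sub_cancel' hm.le, div_self (pow_ne_zero _ h2),
        C_1, map_one]
    rw [hg, mul_right_comm, hc, one_mul]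
  · intro l _ hlm
    rw [map_mul, map_prod, prod_eq_zero (mem_erase.2 ⟨Ne.symm hlm, mem_range.2 hm⟩)
      (Ideal.Quotient.eq_zero_iff_mem.2 (Ideal.mem_span_singleton_self _)), mul_zero]

theorem stmt4_general (K : ℕ) (g : Polynomial ℚ) (gl : ℕ → Polynomial ℚ)
    (h : ∀ l < K,
      Ideal.Quotient.mk (Ideal.span {(1 + X ^ (2 ^ l) : Polynomial ℚ)}) (gl l) =
      Ideal.Quotient.mk (Ideal.span {(1 + X ^ (2 ^ l) : Polynomial ℚ)}) g) :
    Ideal.Quotient.mk (Ideal.span {(∑ i ∈ Finset.range (2 ^ K), X ^ i : Polynomial ℚ)}) g =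
      ∑ l ∈ Finset.range K,
        Ideal.Quotient.mk (Ideal.span {(∑ i ∈ Finset.range (2 ^ K), X ^ i : Polynomial ℚ)})
          (C ((2 : ℚ) ^ l / 2 ^ K) * gl l * (1 - X) *
            ∏ r ∈ (Finset.range K).erase l, (1 + X ^ (2 ^ r))) := by
  rw [← map_sum, Ideal.Quotient.eq, Ideal.mem_span_singleton,
    geom_sum_two_pow_eq_prod_one_add_pow_two_pow]
  have h2 : IsUnit (2 : ℚ[X]) := (IsUnit.mk0 (2 : ℚ) two_ne_zero).map C
  refine prod_dvd_of_coprime ((pairwise_isCoprime_one_add_pow_two_pow h2 X).set_pairwise _) ?_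
  intro m hm
  exact one_add_X_pow_two_pow_dvd_sub_sum two_ne_zero (mem_range.1 hm) g gl (h m (mem_range.1 hm))

/-- Chinese remainder decomposition: if pr_l(g_l) = pr_l(g) for all 0 ≤ l ≤ K-1 then
g = Σ_l 2^{l-K} · g_l · (1-χ) · ∏_{r≠l} (1+χ^{2^r}) in ℚ[χ]/⟨1+χ+⋯+χ^{2^K-1}⟩. -/
theorem stmt4 (K : ℕ) (hK : 1 ≤ K) (g : Polynomial ℚ) (gl : ℕ → Polynomial ℚ)
    (h : ∀ l < K,
      Ideal.Quotient.mk (Ideal.span {(1 + X ^ (2 ^ l) : Polynomial ℚ)}) (gl l) =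
      Ideal.Quotient.mk (Ideal.span {(1 + X ^ (2 ^ l) : Polynomial ℚ)}) g) :
    Ideal.Quotient.mk (Ideal.span {(∑ i ∈ Finset.range (2 ^ K), X ^ i : Polynomial ℚ)}) g =
      ∑ l ∈ Finset.range K,
        Ideal.Quotient.mk (Ideal.span {(∑ i ∈ Finset.range (2 ^ K), X ^ i : Polynomial ℚ)})
          (C ((2 : ℚ) ^ l / 2 ^ K) * gl l * (1 - X) *
            ∏ r ∈ (Finset.range K).erase l, (1 + X ^ (2 ^ r))) :=
  stmt4_general K g gl h
end

section
/- Let N = 2^K and let z be an element of the (-1)-eigenspace ℚR⁻ = {p ∈ ℚ[χ]/⟨1+χ+⋯+χ^{N-1}⟩ : p(χ^{-1}) = -p(χ)} (i.e. z is an ℚ-linear combination of χ^r - χ^{N-r}). If f·z = 0 in ℚ[χ]/⟨1+χ+⋯+χ^{N-1}⟩, where f = (1+χ)/(1-χ) = (1+χ)·(1-χ)^{-1}, then z = 0. -/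
/-!
Write `Φ = 1 + χ + ⋯ + χ^(N-1)` and `Z` for the polynomial representing `z`. Since `Φ(1) = N ≠ 0`,
`1 - χ` is a unit modulo `Φ`, so `f·z = 0` says `Φ ∣ (1 + χ)·Z`. As `N` is even,
`Φ = (1 + χ)·S` with `S = 1 + χ² + ⋯ + χ^(N-2)` and `S(-1) = N/2 ≠ 0`, hence `S ∣ Z`. Every
`χ^r - χ^(N-r)` vanishes at `-1` because `N` is even, so `1 + χ ∣ Z` too, and `1 + χ` being
coprime to `S` gives `Φ ∣ Z`.
-/

noncomputable section
open Polynomial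

/-- The quotient ring ℚ[χ]/⟨1+χ+⋯+χ^{2^K-1}⟩. -/
abbrev QB (K : ℕ) :=
  Polynomial ℚ ⧸ Ideal.span {(∑ i ∈ Finset.range (2 ^ K), X ^ i : Polynomial ℚ)}

def mkB (K : ℕ) : Polynomial ℚ →+* QB K := Ideal.Quotient.mk _

/-- f = (1+χ)·(1-χ)⁻¹. -/
def fQ (K : ℕ) : QB K := mkB K (1 + X) * Ring.inverse (mkB K (1 - X))

open Finset

theorem geom_sum_two_mul {R : Type*} [Semiring R] (x : R) (m : ℕ) :
    ∑ i ∈ range (2 * m), x ^ i = (x + 1) * ∑ i ∈ range m, (x ^ 2) ^ i := by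
  induction m with
  | zero => simp
  | succ m ih =>
    rw [Nat.mul_succ, sum_range_succ, sum_range_succ, ih, sum_range_succ, mul_add, ← pow_mul,
      add_assoc, add_mul x 1 (x ^ (2 * m)), one_mul, ← pow_succ', add_comm (x ^ (2 * m + 1))]

theorem Ideal.Quotient.isUnit_mk_of_isCoprime {R : Type*} [CommRing R] {p q : R}
    (h : IsCoprime p q) : IsUnit (Ideal.Quotient.mk (Ideal.span {q}) p) := by
  obtain ⟨u, v, huv⟩ := h
  refine IsUnit.of_mul_eq_one (Ideal.Quotient.mk _ u) ?_
  rw [← map_mul, ← map_one (Ideal.Quotient.mk _), Ideal.Quotient.eq, Ideal.mem_span_singleton]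
  exact ⟨-v, by linear_combination huv⟩

namespace Polynomial

theorem isCoprime_X_sub_C_of_not_isRoot {K : Type*} [Field K] {p : K[X]} {a : K}
    (h : ¬p.IsRoot a) : IsCoprime (X - C a) p :=
  (irreducible_X_sub_C a).coprime_iff_not_dvd.2 (dvd_iff_isRoot.not.2 h)

theorem X_add_one_dvd_X_pow_sub_X_pow {R : Type*} [CommRing R] {n r : ℕ} (hn : Even n)
    (hr : r ≤ n) : (X + 1 : R[X]) ∣ X ^ r - X ^ (n - r) := by
  have hX : (X + 1 : R[X]) = X - C (-1) := by simp
  rw [hX, dvd_iff_isRoot, IsRoot, eval_sub, eval_pow, eval_pow, eval_X, sub_eq_zero,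
    neg_one_pow_eq_pow_mod_two, neg_one_pow_eq_pow_mod_two (n := n - r)]
  obtain ⟨k, rfl⟩ := hn
  congr 1
  omega

theorem geom_sum_dvd_of_dvd_X_add_one_mul {K : Type*} [Field K] {m : ℕ}
    (hm : (m : K) ≠ 0) {p : K[X]} (hp : ∑ i ∈ range (2 * m), X ^ i ∣ (X + 1) * p)
    (hXp : X + 1 ∣ p) : ∑ i ∈ range (2 * m), (X : K[X]) ^ i ∣ p := by
  set S : K[X] := ∑ i ∈ range m, (X ^ 2) ^ i
  rw [geom_sum_two_mul] at hp ⊢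
  have hX : (X + 1 : K[X]) ≠ 0 := X_add_C_ne_zero 1
  have hSp : S ∣ p := (mul_dvd_mul_iff_left hX).1 hp
  have hS : ¬S.IsRoot (-1) := by simp [S, IsRoot, eval_finsetSum, hm]
  have hcop : IsCoprime (X + 1) S := by
    simpa using isCoprime_X_sub_C_of_not_isRoot hS
  exact hcop.mul_dvd hXp hSp

end Polynomial

theorem mkB_eq_zero_iff {K : ℕ} {p : ℚ[X]} : mkB K p = 0 ↔ ∑ i ∈ range (2 ^ K), X ^ i ∣ p := by
  rw [mkB, Ideal.Quotient.eq_zero_iff_mem, Ideal.mem_span_singleton]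

/-- If z lies in the (-1)-eigenspace (a ℚ-linear combination of χ^r - χ^{N-r}) and
f·z = 0, then z = 0. -/
theorem stmt6 (K : ℕ) (hK : 1 ≤ K) (z : QB K) (a : ℕ → ℚ)
    (hz : z = mkB K (∑ r ∈ Finset.Icc 1 (2 ^ K / 2 - 1),
      C (a r) * (X ^ r - X ^ (2 ^ K - r))))
    (hfz : fQ K * z = 0) : z = 0 := by
  obtain ⟨m, hm⟩ : ∃ m, 2 ^ K = 2 * m := ⟨2 ^ (K - 1), by rw [← pow_succ']; congr 1; omega⟩
  have hm0 : m ≠ 0 := by rintro rfl; simp at hm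
  have hunit : IsUnit (mkB K (1 - X)) := by
    have hΦ : ¬(∑ i ∈ range (2 ^ K), (X : ℚ[X]) ^ i).IsRoot 1 := by
      simp [IsRoot, eval_finsetSum]
    rw [show (1 - X : ℚ[X]) = -(X - C 1) by simp, map_neg]
    exact (Ideal.Quotient.isUnit_mk_of_isCoprime (isCoprime_X_sub_C_of_not_isRoot hΦ)).neg
  have hXz : mkB K (1 + X) * z = 0 := by
    rw [fQ] at hfz
    linear_combination (-(mkB K (1 + X) * z)) * Ring.inverse_mul_cancel _ hunit +
      mkB K (1 - X) * hfz
  rw [hz, ← map_mul, mkB_eq_zero_iff, add_comm, hm] at hXz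
  rw [hz, mkB_eq_zero_iff, hm]
  refine geom_sum_dvd_of_dvd_X_add_one_mul (by simpa using hm0) hXz (dvd_sum fun r hr => ?_)
  exact dvd_mul_of_dvd_right (X_add_one_dvd_X_pow_sub_X_pow (even_two_mul m) (by grind)) _
end
end

section
/- For odd k, define f_k = (1+χ^k)·(1-χ^k)^{-1} and f'_k = (1-χ+χ^2-⋯+χ^{k-1})·(1+χ+χ^2+⋯+χ^{k-1})^{-1} in ℚ[χ]/⟨1+χ+⋯+χ^{N-1}⟩ with N = 2^K. Then f_k = f_1 · f'_k, the element f_k lies in the (-1)-eigenspace (f_k(χ^{-1}) = -f_k(χ)), and f'_k lies in the image of ℤ[χ]/⟨1+χ+⋯+χ^{N-1}⟩. -/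
noncomputable section
open Polynomial

/-- f_k = (1+χ^k)·(1-χ^k)⁻¹. -/
def fkQ (K k : ℕ) : QB K := mkB K (1 + X ^ k) * Ring.inverse (mkB K (1 - X ^ k))

/-- f'_k = (1-χ+χ²-⋯+χ^{k-1})·(1+χ+χ²+⋯+χ^{k-1})⁻¹. -/
def fk'Q (K k : ℕ) : QB K :=
  mkB K (∑ i ∈ Finset.range k, C ((-1 : ℚ) ^ i) * X ^ i) *
    Ring.inverse (mkB K (∑ i ∈ Finset.range k, X ^ i))

/-!
Write `u` for the class of `X` and `v = u ^ k`, so `u ^ N = 1`. Since `k` is odd it is invertible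
mod `N`, say `k * m ≡ 1`, so `u = v ^ m`. As `1 - u` is a unit (`Φ(1) = N ≠ 0` for
`Φ = 1 + X + ⋯ + X^(N-1)`), so is `1 - v`, and `1 + u + ⋯ + u^(k-1) = (1 - v) / (1 - u)` has the
integral inverse `1 + v + ⋯ + v^(m-1)`. The factorisation `f_k = f · f'_k` is `1 ± v = (1 ± u) ·
(geometric sum in ±u)`. For the eigenspace, `∑_{j<N} j v^j = -N / (1 - v)` (differentiated
geometric series, using `v ^ N = 1`), and the same identity for `v⁻¹` gives
`N f_k = ∑_{j<N} j (v^(-j) - v^j)`, a combination of the antisymmetric elements `u^r - u^(-r)`.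
-/

open Finset

section GeomSum

variable {R : Type*} [CommRing R]

lemma weighted_geom_sum_mul (x : R) (n : ℕ) :
    (∑ i ∈ range n, (i : R) * x ^ i) * (1 - x) = x * ∑ i ∈ range n, x ^ i - n * x ^ n := by
  induction n with
  | zero => simp
  | succ n ih =>
    rw [sum_range_succ, sum_range_succ, add_mul, ih]
    push_cast
    ring

lemma weighted_geom_sum_mul_sq_of_pow_eq_one {x : R} {n : ℕ} (hx : x ^ n = 1) :
    (∑ i ∈ range n, (i : R) * x ^ i) * (1 - x) ^ 2 = -n * (1 - x) := by
  linear_combination (1 - x) * weighted_geom_sum_mul x n + x * mul_neg_geom_sum x n +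
    (-x - n * (1 - x)) * hx

lemma isUnit_one_sub_of_geom_sum_eq_zero {x : R} {n : ℕ} (hx : ∑ i ∈ range n, x ^ i = 0)
    (hn : IsUnit (n : R)) : IsUnit (1 - x) := by
  refine isUnit_of_mul_isUnit_left (y := ∑ i ∈ range n, ∑ j ∈ range i, x ^ j) ?_
  rwa [mul_sum, sum_congr rfl fun i _ => mul_neg_geom_sum x i, sum_sub_distrib, hx, sum_const,
    card_range, nsmul_one, sub_zero]

lemma geom_sum_mul_geom_sum_pow_eq_one {x : R} (hx : IsUnit (1 - x)) {k m : ℕ}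
    (hkm : x ^ (k * m) = x) :
    (∑ i ∈ range k, x ^ i) * ∑ j ∈ range m, (x ^ k) ^ j = 1 := by
  refine hx.mul_left_cancel ?_
  rw [← mul_assoc, mul_neg_geom_sum, mul_neg_geom_sum, ← pow_mul, hkm, mul_one]

lemma natCast_mul_cayley_eq_sum {v : Rˣ} {n : ℕ} (hv : v ^ n = 1) (h : IsUnit (1 - (v : R))) :
    (n : R) * ((1 + (v : R)) * Ring.inverse (1 - (v : R))) =
      ∑ j ∈ range n, (j : R) * (((v⁻¹ ^ j : Rˣ) : R) - ((v ^ j : Rˣ) : R)) := by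
  have hA := weighted_geom_sum_mul_sq_of_pow_eq_one (x := (v : R)) (n := n) (by
    rw [← Units.val_pow_eq_pow_val, hv, Units.val_one])
  have hB := weighted_geom_sum_mul_sq_of_pow_eq_one (x := ((v⁻¹ : Rˣ) : R)) (n := n) (by
    rw [← Units.val_pow_eq_pow_val, inv_pow, hv, inv_one, Units.val_one])
  have hB' : (∑ i ∈ range n, (i : R) * ((v⁻¹ : Rˣ) : R) ^ i) * (1 - (v : R)) ^ 2 =
      n * v * (1 - v) := by
    have hv' : 1 - (v : R) = -v * (1 - ((v⁻¹ : Rˣ) : R)) := by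
      linear_combination -v.mul_inv
    rw [hv']
    linear_combination (v : R) ^ 2 * hB
  simp only [Units.val_pow_eq_pow_val, mul_sub, sum_sub_distrib]
  rw [← mul_assoc, eq_comm, Ring.eq_mul_inverse_iff_mul_eq _ _ _ h]
  refine h.mul_left_cancel ?_
  linear_combination hB' - hA

end GeomSum

lemma exists_pow_mul_eq_self {M : Type*} [Monoid M] {x : M} {n k : ℕ} (hn : n ≠ 0)
    (hx : x ^ n = 1) (hk : k.Coprime n) : ∃ m, x ^ (k * m) = x := by
  refine ⟨k ^ (Nat.totient n - 1), ?_⟩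
  rw [← pow_succ', Nat.sub_add_cancel (Nat.totient_pos.2 (Nat.pos_of_ne_zero hn)),
    pow_eq_pow_mod _ hx, Nat.ModEq.pow_totient hk, ← pow_eq_pow_mod _ hx, pow_one]

section Quotient

variable (K : ℕ)

lemma geom_sum_mkB_X_eq_zero : ∑ i ∈ range (2 ^ K), mkB K X ^ i = 0 := by
  have h : mkB K (∑ i ∈ range (2 ^ K), X ^ i) = 0 :=
    Ideal.Quotient.eq_zero_iff_mem.2 (Ideal.subset_span rfl)
  simpa only [map_sum, map_pow] using h

lemma mkB_X_pow_two_pow : mkB K X ^ 2 ^ K = 1 := by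
  have h := mul_neg_geom_sum (mkB K X) (2 ^ K)
  rw [geom_sum_mkB_X_eq_zero, mul_zero] at h
  exact (sub_eq_zero.1 h.symm).symm

lemma isUnit_one_sub_mkB_X : IsUnit (1 - mkB K X) := by
  refine isUnit_one_sub_of_geom_sum_eq_zero (geom_sum_mkB_X_eq_zero K) ?_
  have h : IsUnit ((2 : ℚ) ^ K) := (pow_ne_zero K two_ne_zero).isUnit
  simpa only [map_pow, map_ofNat, Nat.cast_pow, Nat.cast_ofNat] using h.map (algebraMap ℚ (QB K))

def chi : (QB K)ˣ :=
  Units.ofPowEqOne (mkB K X) (2 ^ K) (mkB_X_pow_two_pow K) (by positivity)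

lemma chi_pow_two_pow : chi K ^ 2 ^ K = 1 := Units.pow_ofPowEqOne _ _

lemma val_chi_pow (n : ℕ) : ((chi K ^ n : (QB K)ˣ) : QB K) = mkB K X ^ n := by
  simp [chi]

/-- The `(-1)`-eigenspace of the involution `χ ↦ χ⁻¹`. -/
def oddSpan : Submodule ℚ (QB K) :=
  Submodule.span ℚ {x : QB K | ∃ r : ℕ, 1 ≤ r ∧ r ≤ 2 ^ K / 2 - 1 ∧
    x = mkB K (X ^ r - X ^ (2 ^ K - r))}

lemma pow_sub_pow_mem_oddSpan {r : ℕ} (hr : r ≤ 2 ^ K) :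
    mkB K X ^ (2 ^ K - r) - mkB K X ^ r ∈ oddSpan K := by
  have mem_of_lt_half : ∀ s, 2 * s < 2 ^ K → mkB K X ^ s - mkB K X ^ (2 ^ K - s) ∈ oddSpan K := by
    intro s hs
    rcases Nat.eq_zero_or_pos s with rfl | hs0
    · simp [mkB_X_pow_two_pow]
    · have hN : 2 ^ K = 1 ∨ 2 ∣ 2 ^ K := by
        rcases K with _ | K
        · exact .inl rfl
        · exact .inr (dvd_pow_self 2 K.succ_ne_zero)
      exact Submodule.subset_span ⟨s, hs0, by omega, by simp⟩
  rcases lt_trichotomy (2 * r) (2 ^ K) with h | h | h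
  · simpa using neg_mem (mem_of_lt_half r h)
  · rw [show 2 ^ K - r = r by omega, sub_self]
    exact zero_mem _
  · simpa [Nat.sub_sub_self hr] using mem_of_lt_half (2 ^ K - r) (by omega)

lemma inv_pow_sub_pow_mem_oddSpan (n : ℕ) :
    (((chi K)⁻¹ ^ n : (QB K)ˣ) : QB K) - ((chi K ^ n : (QB K)ˣ) : QB K) ∈ oddSpan K := by
  have hr : n % 2 ^ K ≤ 2 ^ K := (Nat.mod_lt _ (by positivity)).le
  have hinv : (chi K)⁻¹ ^ (n % 2 ^ K) = chi K ^ (2 ^ K - n % 2 ^ K) := by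
    rw [pow_sub _ hr, chi_pow_two_pow, one_mul, inv_pow]
  have hinv_pow : (chi K)⁻¹ ^ 2 ^ K = 1 := by rw [inv_pow, chi_pow_two_pow, inv_one]
  rw [pow_eq_pow_mod n (chi_pow_two_pow K), pow_eq_pow_mod n hinv_pow, hinv, val_chi_pow,
    val_chi_pow]
  exact pow_sub_pow_mem_oddSpan K hr

variable {K} {k : ℕ}

lemma exists_geom_sum_mul_eq_one (hk : Odd k) : ∃ m : ℕ,
    (∑ i ∈ range k, mkB K X ^ i) * ∑ j ∈ range m, (mkB K X ^ k) ^ j = 1 := by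
  obtain ⟨m, hm⟩ := exists_pow_mul_eq_self (by positivity) (mkB_X_pow_two_pow K)
    (Nat.Coprime.pow_right K (Nat.coprime_two_right.2 hk))
  exact ⟨m, geom_sum_mul_geom_sum_pow_eq_one (isUnit_one_sub_mkB_X K) hm⟩

lemma isUnit_one_sub_mkB_X_pow (hk : Odd k) : IsUnit (1 - mkB K X ^ k) := by
  obtain ⟨m, hm⟩ := exists_geom_sum_mul_eq_one (K := K) hk
  rw [← mul_neg_geom_sum]
  exact (isUnit_one_sub_mkB_X K).mul (IsUnit.of_mul_eq_one _ hm)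

lemma mkB_alternating_sum :
    mkB K (∑ i ∈ range k, C ((-1 : ℚ) ^ i) * X ^ i) = ∑ i ∈ range k, (-mkB K X) ^ i := by
  rw [map_sum]
  refine sum_congr rfl fun i _ => ?_
  have h : (C ((-1 : ℚ) ^ i) * X ^ i : ℚ[X]) = (-X) ^ i := by
    rw [neg_pow (X : ℚ[X]), C_pow, C_neg, C_1]
  rw [h, map_pow, map_neg]

lemma fkQ_eq_fQ_mul_fk'Q (hk : Odd k) : fkQ K k = fQ K * fk'Q K k := by
  have hplus : mkB K (1 + X ^ k) = (1 + mkB K X) * ∑ i ∈ range k, (-mkB K X) ^ i := by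
    have h := mul_neg_geom_sum (-mkB K X) k
    rw [hk.neg_pow (mkB K X), sub_neg_eq_add, sub_neg_eq_add] at h
    rw [h, map_add, map_one, map_pow]
  have hminus : mkB K (1 - X ^ k) = (1 - mkB K X) * ∑ i ∈ range k, mkB K X ^ i := by
    rw [mul_neg_geom_sum, map_sub, map_one, map_pow]
  rw [fkQ, fQ, fk'Q, hplus, hminus, Ring.mul_inverse_rev, mkB_alternating_sum, map_sum, map_add,
    map_sub, map_one]
  simp only [map_pow]
  ring

lemma fkQ_mem_oddSpan (hk : Odd k) : fkQ K k ∈ oddSpan K := by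
  have hcayley := natCast_mul_cayley_eq_sum (v := chi K ^ k) (n := 2 ^ K)
    (by rw [← pow_mul, mul_comm, pow_mul, chi_pow_two_pow, one_pow])
    (by rw [val_chi_pow]; exact isUnit_one_sub_mkB_X_pow hk)
  rw [val_chi_pow] at hcayley
  have hfk : fkQ K k = (1 + mkB K X ^ k) * Ring.inverse (1 - mkB K X ^ k) := by
    simp [fkQ]
  rw [← Submodule.smul_mem_iff _ (by positivity : ((2 ^ K : ℕ) : ℚ) ≠ 0), Nat.cast_smul_eq_nsmul,
    nsmul_eq_mul, hfk, hcayley]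
  refine Submodule.sum_mem _ fun j _ => ?_
  rw [← nsmul_eq_mul, inv_pow, ← pow_mul, ← inv_pow]
  exact nsmul_mem (inv_pow_sub_pow_mem_oddSpan K _) j

lemma exists_fk'Q_eq_mkB_map (hk : Odd k) :
    ∃ p : Polynomial ℤ, fk'Q K k = mkB K (p.map (Int.castRingHom ℚ)) := by
  obtain ⟨m, hm⟩ := exists_geom_sum_mul_eq_one (K := K) hk
  refine ⟨(∑ i ∈ range k, (-X) ^ i) * ∑ j ∈ range m, (X ^ k) ^ j, ?_⟩
  have hinv : Ring.inverse (∑ i ∈ range k, mkB K X ^ i) = ∑ j ∈ range m, (mkB K X ^ k) ^ j :=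
    Ring.inverse_unit (Units.mkOfMulEqOne _ _ hm)
  rw [fk'Q, mkB_alternating_sum]
  simp only [map_sum, map_pow, hinv]
  simp [Polynomial.map_sum]

end Quotient

theorem stmt7_general (K k : ℕ) (hk : Odd k) :
    fkQ K k = fQ K * fk'Q K k ∧
    fkQ K k ∈ Submodule.span ℚ
      {x : QB K | ∃ r : ℕ, 1 ≤ r ∧ r ≤ 2 ^ K / 2 - 1 ∧
        x = mkB K (X ^ r - X ^ (2 ^ K - r))} ∧
    ∃ p : Polynomial ℤ, fk'Q K k = mkB K (p.map (Int.castRingHom ℚ)) :=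
  ⟨fkQ_eq_fQ_mul_fk'Q hk, fkQ_mem_oddSpan hk, exists_fk'Q_eq_mkB_map hk⟩

/-- f_k = f·f'_k, f_k lies in the (-1)-eigenspace (the ℚ-span of the χ^r - χ^{N-r}),
and f'_k lies in the image of ℤ[χ]/⟨1+χ+⋯+χ^{N-1}⟩. -/
theorem stmt7 (K k : ℕ) (hK : 1 ≤ K) (hk : Odd k) :
    fkQ K k = fQ K * fk'Q K k ∧
    fkQ K k ∈ Submodule.span ℚ
      {x : QB K | ∃ r : ℕ, 1 ≤ r ∧ r ≤ 2 ^ K / 2 - 1 ∧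
        x = mkB K (X ^ r - X ^ (2 ^ K - r))} ∧
    ∃ p : Polynomial ℤ, fk'Q K k = mkB K (p.map (Int.castRingHom ℚ)) :=
  stmt7_general K k hk
end
end

section
/- Existence of w_l-normal form: Let N = 2^K, 0 ≤ l ≤ K-1, and g ∈ ℚ[χ]/⟨1+χ+⋯+χ^{N-1}⟩ such that 1+χ^{2^l} does not divide g. Then there exist integers a, u with u odd, b ∈ {0,1,…,2^l-1}, and polynomials v₁, v₂ ∈ ℤ[χ] with v₁(1) odd, such that pr_l(g) = (2^a/u)·((1-χ)^b·v₁(χ) + 2·v₂(χ)) in ℚ[χ]/⟨1+χ^{2^l}⟩. -/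
/-!
Reducing modulo the monic polynomial `1 + X ^ 2 ^ l` replaces `p` by a nonzero remainder `r` of
degree `< 2 ^ l`. Clearing denominators and pulling out the largest power of `2` writes
`r = (2 ^ a / u) • w` with `u` odd and `w ∈ ℤ[X]` not divisible by `2`. Modulo `2`, `w` factors as
`(X - 1) ^ b * s` with `s(1) ≠ 0`, where `b` is the multiplicity of the root `1`, so
`b ≤ deg w < 2 ^ l`; lifting `s` to `v₁ ∈ ℤ[X]` and using `1 - X ≡ X - 1 (mod 2)` gives
`w = (1 - X) ^ b * v₁ + 2 * v₂` with `v₁(1)` odd.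
-/

open Polynomial

namespace Polynomial

theorem map_intCastRingHom_zmod_eq_zero_iff (n : ℕ) (w : ℤ[X]) :
    w.map (Int.castRingHom (ZMod n)) = 0 ↔ (n : ℤ[X]) ∣ w := by
  rw [← map_natCast C, C_dvd_iff_dvd_coeff, Polynomial.ext_iff]
  simp [ZMod.intCast_zmod_eq_zero_iff_dvd]

theorem exists_eq_one_sub_X_pow_mul_add_two_mul {w : ℤ[X]} (hw : ¬ (2 : ℤ[X]) ∣ w) :
    ∃ (b : ℕ) (v₁ v₂ : ℤ[X]), b ≤ w.natDegree ∧ Odd (v₁.eval 1) ∧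
      w = (1 - X) ^ b * v₁ + 2 * v₂ := by
  set π := Int.castRingHom (ZMod 2)
  have hw₂ : w.map π ≠ 0 := by
    rw [Ne, map_intCastRingHom_zmod_eq_zero_iff]; exact_mod_cast hw
  set b := rootMultiplicity 1 (w.map π) with hb_def
  obtain ⟨v₁, hv₁⟩ := map_surjective π (ZMod.intCast_surjective) (w.map π /ₘ (X - C 1) ^ b)
  have hb : b ≤ w.natDegree := by
    rw [hb_def, ← count_roots]
    exact (Multiset.count_le_card _ _).trans ((card_roots' _).trans natDegree_map_le)
  have hv₁_odd : Odd (v₁.eval 1) := by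
    have h := eval_divByMonic_pow_rootMultiplicity_ne_zero 1 hw₂
    rw [← hv₁, eval_one_map, eq_intCast, Ne, ZMod.intCast_zmod_eq_zero_iff_dvd] at h
    exact Int.not_even_iff_odd.mp (fun he => h (by exact_mod_cast he.two_dvd))
  have h_one_sub_X : (1 - X : (ZMod 2)[X]) = X - C 1 := by
    rw [CharTwo.sub_eq_add, CharTwo.sub_eq_add, C_1, add_comm]
  have h_even : (w - (1 - X) ^ b * v₁).map π = 0 := by
    rw [Polynomial.map_sub, Polynomial.map_mul, Polynomial.map_pow, Polynomial.map_sub,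
      Polynomial.map_one, map_X, hv₁, h_one_sub_X, pow_mul_divByMonic_rootMultiplicity_eq,
      sub_self]
  obtain ⟨v₂, hv₂⟩ := (map_intCastRingHom_zmod_eq_zero_iff 2 _).mp h_even
  exact ⟨b, v₁, v₂, hb, hv₁_odd, by push_cast at hv₂; linear_combination hv₂⟩

theorem exists_eq_C_two_zpow_div_mul_map {r : ℚ[X]} (hr : r ≠ 0) :
    ∃ (a u : ℤ) (w : ℤ[X]), Odd u ∧ ¬ (2 : ℤ[X]) ∣ w ∧ w.natDegree = r.natDegree ∧
      r = C ((2 : ℚ) ^ a / u) * w.map (Int.castRingHom ℚ) := by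
  obtain ⟨n, hn, hw₀⟩ := IsLocalization.integerNormalization_spec (nonZeroDivisors ℤ) r
  generalize IsLocalization.integerNormalization (nonZeroDivisors ℤ) r = w₀ at hw₀
  have hn0 : n ≠ 0 := nonZeroDivisors.ne_zero hn
  have hw₀0 : w₀ ≠ 0 := by
    rintro h
    rw [h, Polynomial.map_zero, eq_comm, smul_eq_zero] at hw₀
    exact hw₀.elim hn0 hr
  obtain ⟨t, w, hw, rfl⟩ := WfDvdMonoid.max_power_factor' (x := (2 : ℤ[X])) hw₀0
    (by rw [← map_ofNat C, isUnit_C, Int.isUnit_iff]; omega)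
  obtain ⟨s, u, hu, rfl⟩ := WfDvdMonoid.max_power_factor' (x := (2 : ℤ)) hn0
    (by rw [Int.isUnit_iff]; omega)
  have hu0 : (u : ℚ) ≠ 0 := Int.cast_ne_zero.mpr (by rintro rfl; exact hu (dvd_zero 2))
  have hr_eq : r = C ((2 : ℚ) ^ ((t : ℤ) - s) / u) * w.map (Int.castRingHom ℚ) := by
    rw [algebraMap_int_eq, Polynomial.map_mul, Polynomial.map_pow, Polynomial.map_ofNat,
      zsmul_eq_mul] at hw₀
    rw [zpow_sub₀ two_ne_zero, zpow_natCast, zpow_natCast]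
    apply mul_left_cancel₀ (C_ne_zero.mpr (mul_ne_zero (pow_ne_zero s two_ne_zero) hu0))
    have h2 : (2 ^ s * u : ℚ) * (2 ^ t / 2 ^ s / u) = 2 ^ t := by field_simp
    rw [← mul_assoc, ← C_mul, h2]
    convert hw₀.symm using 1 <;> simp [map_ofNat C]
  refine ⟨t - s, u, w, Int.not_even_iff_odd.mp (fun he => hu he.two_dvd), hw, ?_, hr_eq⟩
  rw [hr_eq, natDegree_C_mul (div_ne_zero (zpow_ne_zero _ two_ne_zero) hu0),
    natDegree_map_eq_of_injective (RingHom.injective_int _)]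

theorem exists_natDegree_lt_mk_eq_of_mk_ne_zero {R : Type*} [CommRing R] {f p : R[X]}
    (hf : f.Monic) (hp : Ideal.Quotient.mk (Ideal.span {f}) p ≠ 0) :
    ∃ r : R[X], r ≠ 0 ∧ r.natDegree < f.natDegree ∧
      Ideal.Quotient.mk (Ideal.span {f}) p = Ideal.Quotient.mk (Ideal.span {f}) r := by
  rw [Ne, Ideal.Quotient.eq_zero_iff_mem, Ideal.mem_span_singleton] at hp
  refine ⟨p %ₘ f, fun h => hp ((modByMonic_eq_zero_iff_dvd hf).mp h),
    natDegree_modByMonic_lt p hf (by rintro rfl; exact hp (one_dvd p)), ?_⟩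
  rw [Ideal.Quotient.eq, Ideal.mem_span_singleton]
  exact Dvd.intro _ (eq_sub_of_add_eq' (modByMonic_add_div p f))

end Polynomial

theorem stmt8_general (l : ℕ) (p : Polynomial ℚ)
    (hnz : Ideal.Quotient.mk (Ideal.span {(1 + X ^ (2 ^ l) : Polynomial ℚ)}) p ≠ 0) :
    ∃ (a u : ℤ) (b : ℕ) (v₁ v₂ : Polynomial ℤ), Odd u ∧ b < 2 ^ l ∧ Odd (v₁.eval 1) ∧
      Ideal.Quotient.mk (Ideal.span {(1 + X ^ (2 ^ l) : Polynomial ℚ)}) p =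
        Ideal.Quotient.mk (Ideal.span {(1 + X ^ (2 ^ l) : Polynomial ℚ)})
          (C ((2 : ℚ) ^ a / (u : ℚ)) *
            ((1 - X) ^ b * v₁.map (Int.castRingHom ℚ) + 2 * v₂.map (Int.castRingHom ℚ))) := by
  have hf : (1 + X ^ (2 ^ l) : ℚ[X]) = X ^ (2 ^ l) + C 1 := by rw [C_1, add_comm]
  obtain ⟨r, hr0, hr_deg, hpr⟩ := exists_natDegree_lt_mk_eq_of_mk_ne_zero
    (hf ▸ monic_X_pow_add_C 1 (pow_ne_zero l two_ne_zero)) hnz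
  rw [hf, natDegree_X_pow_add_C] at hr_deg
  obtain ⟨a, u, w, hu, hw, hw_deg, rfl⟩ := exists_eq_C_two_zpow_div_mul_map hr0
  obtain ⟨b, v₁, v₂, hb, hv₁, rfl⟩ := exists_eq_one_sub_X_pow_mul_add_two_mul hw
  refine ⟨a, u, b, v₁, v₂, hu, by omega, hv₁, ?_⟩
  rw [hpr]
  simp

/-- Existence of the w_l-normal form: if 1+χ^{2^l} does not divide g (represented by the
polynomial p), then there exist a, u (u odd), 0 ≤ b < 2^l and v₁, v₂ ∈ ℤ[χ] with v₁(1) odd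
such that pr_l(g) = (2^a/u)·((1-χ)^b·v₁ + 2·v₂). -/
theorem stmt8 (K l : ℕ) (hK : 1 ≤ K) (hl : l ≤ K - 1) (p : Polynomial ℚ)
    (hnz : Ideal.Quotient.mk (Ideal.span {(1 + X ^ (2 ^ l) : Polynomial ℚ)}) p ≠ 0) :
    ∃ (a u : ℤ) (b : ℕ) (v₁ v₂ : Polynomial ℤ), Odd u ∧ b < 2 ^ l ∧ Odd (v₁.eval 1) ∧
      Ideal.Quotient.mk (Ideal.span {(1 + X ^ (2 ^ l) : Polynomial ℚ)}) p =
        Ideal.Quotient.mk (Ideal.span {(1 + X ^ (2 ^ l) : Polynomial ℚ)})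
          (C ((2 : ℚ) ^ a / (u : ℚ)) *
            ((1 - X) ^ b * v₁.map (Int.castRingHom ℚ) + 2 * v₂.map (Int.castRingHom ℚ))) :=
  stmt8_general l p hnz
end

section
/- Uniqueness in the w_l-normal form: with notation as in the existence statement, if pr_l(g) = (2^a/u)·((1-χ)^b·v₁ + 2·v₂) = (2^{a'}/u')·((1-χ)^{b'}·v'₁ + 2·v'₂) in ℚ[χ]/⟨1+χ^{2^l}⟩, with u, u', v₁(1), v'₁(1) all odd and b, b' ∈ {0,…,2^l-1}, then a = a' and b = b'. -/
open Polynomial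


lemma lemA {n b : ℕ} (hb : b < n) (f : Polynomial (ZMod 2)) (hf : f.eval 1 ≠ 0) :
    ¬ ((1 + X : Polynomial (ZMod 2))^n ∣ (1 + X)^b * f) := by
  intro h
  have hx : (1 + X : Polynomial (ZMod 2)) ≠ 0 := by
    intro h0
    have := congrArg (eval 0) h0
    simp at this
  have h2 : (1+X : Polynomial (ZMod 2))^(n-b) ∣ f := by
    have h1 : (1+X : Polynomial (ZMod 2))^b * (1+X)^(n-b) ∣ (1+X)^b * f := by
      rw [← pow_add, Nat.add_sub_cancel' hb.le]; exact h
    exact (mul_dvd_mul_iff_left (pow_ne_zero b hx)).mp h1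
  have h3 : (1+X : Polynomial (ZMod 2)) ∣ f :=
    dvd_trans (dvd_pow_self _ (by omega)) h2
  obtain ⟨g, hg⟩ := h3
  apply hf
  rw [hg]
  simp [show ((1:ZMod 2)+1) = 0 from rfl]

lemma lemB' {n b b' : ℕ} (hbb : b ≤ b') (hb : b < n) (f g : Polynomial (ZMod 2))
    (hf : f.eval 1 ≠ 0) (hg : g.eval 1 ≠ 0)
    (hdvd : (1 + X : Polynomial (ZMod 2))^n ∣ (1+X)^b * f - (1+X)^b' * g) : b = b' := by
  by_contra hne
  have hbb' : b < b' := lt_of_le_of_ne hbb hne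
  have hx : (1 + X : Polynomial (ZMod 2)) ≠ 0 := by
    intro h0
    have := congrArg (eval 0) h0
    simp at this
  have h1 : (1+X : Polynomial (ZMod 2))^b * (1+X)^(n-b) ∣
      (1+X)^b * (f - (1+X)^(b'-b) * g) := by
    rw [← pow_add, Nat.add_sub_cancel' hb.le, mul_sub, ← mul_assoc, ← pow_add,
      Nat.add_sub_cancel' hbb]
    exact hdvd
  have h2 := (mul_dvd_mul_iff_left (pow_ne_zero b hx)).mp h1
  have h3 : (1+X : Polynomial (ZMod 2)) ∣ f - (1+X)^(b'-b) * g :=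
    dvd_trans (dvd_pow_self _ (by omega)) h2
  obtain ⟨w, hw⟩ := h3
  have := congrArg (eval 1) hw
  simp [show ((1:ZMod 2)+1) = 0 from rfl, zero_pow (by omega : b' - b ≠ 0)] at this
  exact hf this

lemma lemB {n b b' : ℕ} (hb : b < n) (hb' : b' < n) (f g : Polynomial (ZMod 2))
    (hf : f.eval 1 ≠ 0) (hg : g.eval 1 ≠ 0)
    (hdvd : (1 + X : Polynomial (ZMod 2))^n ∣ (1+X)^b * f - (1+X)^b' * g) : b = b' := by
  rcases le_total b b' with h | h
  · exact lemB' h hb f g hf hg hdvd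
  · exact (lemB' h hb' g f hg hf (by rw [← neg_sub]; exact dvd_neg.mpr hdvd)).symm

lemma oddCast {w : ℤ} (hw : Odd w) : (Int.castRingHom (ZMod 2)) w = 1 := by
  obtain ⟨k, rfl⟩ := hw
  rw [map_add, map_mul, map_one, show (Int.castRingHom (ZMod 2)) 2 = 0 by decide,
    zero_mul, zero_add]

lemma two_eq_zero : (2 : Polynomial (ZMod 2)) = 0 := by
  rw [show (2 : Polynomial (ZMod 2)) = C 2 from (map_ofNat C 2).symm,
    show ((2:ZMod 2)) = 0 from rfl, map_zero]

lemma keyInt (n : ℕ) (hpow : (1 + X^n : Polynomial (ZMod 2)) = (1+X)^n)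
    (u u' : ℤ) (d b b' : ℕ) (v₁ v₂ v₁' v₂' : Polynomial ℤ)
    (hu : Odd u) (hu' : Odd u') (hb : b < n) (hb' : b' < n)
    (hv₁ : Odd (v₁.eval 1)) (hv₁' : Odd (v₁'.eval 1))
    (hdvd : (1 + X^n : Polynomial ℤ) ∣
      C u' * ((1-X)^b * v₁ + 2 * v₂) - C (u * 2^d) * ((1-X)^b' * v₁' + 2 * v₂')) :
    d = 0 ∧ b = b' := by
  have hmap := Polynomial.map_dvd (Int.castRingHom (ZMod 2)) hdvd
  simp only [Polynomial.map_sub, Polynomial.map_mul, Polynomial.map_add,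
    Polynomial.map_pow, Polynomial.map_one, Polynomial.map_X, Polynomial.map_C,
    Polynomial.map_ofNat, map_mul, map_pow, CharTwo.sub_eq_add] at hmap
  rw [hpow, two_eq_zero, oddCast hu', oddCast hu,
    show (Int.castRingHom (ZMod 2)) 2 = 0 by decide] at hmap
  simp only [map_one, map_zero, one_mul, mul_zero, zero_mul, add_zero] at hmap
  have hev : ((v₁.map (Int.castRingHom (ZMod 2))).eval 1) ≠ 0 := by
    rw [eval_one_map, oddCast hv₁]; exact one_ne_zero
  have hev' : ((v₁'.map (Int.castRingHom (ZMod 2))).eval 1) ≠ 0 := by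
    rw [eval_one_map, oddCast hv₁']; exact one_ne_zero
  rcases Nat.eq_zero_or_pos d with hd | hd
  · subst hd
    simp only [pow_zero, one_mul] at hmap
    refine ⟨rfl, lemB hb hb' _ _ hev hev' ?_⟩
    · rw [CharTwo.sub_eq_add]; exact hmap
  · exfalso
    rw [zero_pow (by omega : d ≠ 0)] at hmap
    simp only [zero_mul, mul_zero] at hmap
    rw [add_zero] at hmap
    exact lemA hb _ hev hmap

lemma auxQ (n : ℕ) (hn : n ≠ 0) (hpow : (1 + X^n : Polynomial (ZMod 2)) = (1+X)^n)
    (a a' u u' : ℤ) (b b' : ℕ) (v₁ v₂ v₁' v₂' : Polynomial ℤ)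
    (hu : Odd u) (hu' : Odd u') (hb : b < n) (hb' : b' < n)
    (hv₁ : Odd (v₁.eval 1)) (hv₁' : Odd (v₁'.eval 1)) (haa : a ≤ a')
    (hdvd : (1 + X^n : Polynomial ℚ) ∣
      C ((2:ℚ)^a / (u:ℚ)) * ((1-X)^b * v₁.map (Int.castRingHom ℚ) + 2 * v₂.map (Int.castRingHom ℚ)) -
      C ((2:ℚ)^a' / (u':ℚ)) * ((1-X)^b' * v₁'.map (Int.castRingHom ℚ) + 2 * v₂'.map (Int.castRingHom ℚ))) :
    a = a' ∧ b = b' := by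
  have hu0 : (u:ℚ) ≠ 0 := by
    have : u ≠ 0 := by rintro rfl; rw [Int.odd_iff] at hu; omega
    exact_mod_cast this
  have hu0' : (u':ℚ) ≠ 0 := by
    have : u' ≠ 0 := by rintro rfl; rw [Int.odd_iff] at hu'; omega
    exact_mod_cast this
  set d : ℕ := (a' - a).toNat with hdd
  have hdnat : ((d : ℤ)) = a' - a := Int.toNat_of_nonneg (sub_nonneg.mpr haa)
  have s1 : (u:ℚ) * u' * (2:ℚ)^(-a) * ((2:ℚ)^a / u) = (u':ℚ) := by
    have h2a : (2:ℚ)^(-a) * (2:ℚ)^a = 1 := by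
      rw [← zpow_add₀ (by norm_num : (2:ℚ) ≠ 0)]; simp
    calc (u:ℚ) * u' * (2:ℚ)^(-a) * ((2:ℚ)^a / u)
        = (u':ℚ) * ((2:ℚ)^(-a) * (2:ℚ)^a) * ((u:ℚ)/u) := by ring
      _ = u' := by rw [h2a, div_self hu0]; ring
  have s2 : (u:ℚ) * u' * (2:ℚ)^(-a) * ((2:ℚ)^a' / u') = (((u * 2^d : ℤ)) : ℚ) := by
    have h2a : (2:ℚ)^(-a) * (2:ℚ)^a' = (2:ℚ)^(d : ℤ) := by
      rw [← zpow_add₀ (by norm_num : (2:ℚ) ≠ 0), hdnat]; ring_nf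
    calc (u:ℚ) * u' * (2:ℚ)^(-a) * ((2:ℚ)^a' / u')
        = (u:ℚ) * ((2:ℚ)^(-a) * (2:ℚ)^a') * ((u':ℚ)/u') := by ring
      _ = (u:ℚ) * (2:ℚ)^(d : ℤ) := by rw [h2a, div_self hu0']; ring
      _ = (((u * 2^d : ℤ)) : ℚ) := by push_cast; rw [zpow_natCast]
  -- integer polynomial
  set F : Polynomial ℤ := C u' * ((1-X)^b * v₁ + 2 * v₂) - C (u * 2^d) * ((1-X)^b' * v₁' + 2 * v₂')
    with hF
  have hFmap : F.map (Int.castRingHom ℚ) =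
      C ((u:ℚ) * u' * (2:ℚ)^(-a)) *
        (C ((2:ℚ)^a / (u:ℚ)) * ((1-X)^b * v₁.map (Int.castRingHom ℚ) + 2 * v₂.map (Int.castRingHom ℚ)) -
         C ((2:ℚ)^a' / (u':ℚ)) * ((1-X)^b' * v₁'.map (Int.castRingHom ℚ) + 2 * v₂'.map (Int.castRingHom ℚ))) := by
    rw [hF]
    simp only [Polynomial.map_sub, Polynomial.map_mul, Polynomial.map_add,
      Polynomial.map_pow, Polynomial.map_one, Polynomial.map_X, Polynomial.map_C,
      Polynomial.map_ofNat, Int.coe_castRingHom]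
    rw [mul_sub, ← mul_assoc, ← mul_assoc, ← C_mul, ← C_mul, s1, s2]
  have hdvdF : (1 + X^n : Polynomial ℚ) ∣ F.map (Int.castRingHom ℚ) := by
    rw [hFmap]; exact Dvd.dvd.mul_left hdvd _
  have hmonic : (1 + X^n : Polynomial ℤ).Monic := by
    rw [add_comm, ← C_1]; exact monic_X_pow_add_C _ hn
  have hdvdZ : (1 + X^n : Polynomial ℤ) ∣ F := by
    rw [← map_dvd_map (Int.castRingHom ℚ) Int.cast_injective hmonic]
    simpa using hdvdF
  obtain ⟨hd0, hbb⟩ := keyInt n hpow u u' d b b' v₁ v₂ v₁' v₂' hu hu' hb hb' hv₁ hv₁' hdvdZ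
  refine ⟨?_, hbb⟩
  omega


/-- Uniqueness in the w_l-normal form: two normal forms of the same nonzero element
pr_l(g) have the same a and b. -/
theorem stmt9 (K l : ℕ) (hK : 1 ≤ K) (hl : l ≤ K - 1) (p : Polynomial ℚ)
    (hnz : Ideal.Quotient.mk (Ideal.span {(1 + X ^ (2 ^ l) : Polynomial ℚ)}) p ≠ 0)
    (a a' u u' : ℤ) (b b' : ℕ) (v₁ v₁' v₂ v₂' : Polynomial ℤ)
    (hu : Odd u) (hu' : Odd u') (hb : b < 2 ^ l) (hb' : b' < 2 ^ l)
    (hv₁ : Odd (v₁.eval 1)) (hv₁' : Odd (v₁'.eval 1))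
    (heq : Ideal.Quotient.mk (Ideal.span {(1 + X ^ (2 ^ l) : Polynomial ℚ)}) p =
      Ideal.Quotient.mk (Ideal.span {(1 + X ^ (2 ^ l) : Polynomial ℚ)})
        (C ((2 : ℚ) ^ a / (u : ℚ)) *
          ((1 - X) ^ b * v₁.map (Int.castRingHom ℚ) + 2 * v₂.map (Int.castRingHom ℚ))))
    (heq' : Ideal.Quotient.mk (Ideal.span {(1 + X ^ (2 ^ l) : Polynomial ℚ)}) p =
      Ideal.Quotient.mk (Ideal.span {(1 + X ^ (2 ^ l) : Polynomial ℚ)})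
        (C ((2 : ℚ) ^ a' / (u' : ℚ)) *
          ((1 - X) ^ b' * v₁'.map (Int.castRingHom ℚ) + 2 * v₂'.map (Int.castRingHom ℚ)))) :
    a = a' ∧ b = b' := by
  have hpow : (1 + X ^ (2^l) : Polynomial (ZMod 2)) = (1 + X)^(2^l) := by
    rw [add_pow_char_pow, one_pow]
  have hn : (2:ℕ)^l ≠ 0 := pow_ne_zero _ (by norm_num)
  have hdvd := Ideal.mem_span_singleton.mp (Ideal.Quotient.eq.mp (heq.symm.trans heq'))
  rcases le_total a a' with h | h
  · exact auxQ (2^l) hn hpow a a' u u' b b' v₁ v₂ v₁' v₂' hu hu' hb hb' hv₁ hv₁' h hdvd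
  · obtain ⟨h1, h2⟩ := auxQ (2^l) hn hpow a' a u' u b' b v₁' v₂' v₁ v₂ hu' hu hb' hb hv₁' hv₁ h
      (by rw [← neg_sub]; exact dvd_neg.mpr hdvd)
    exact ⟨h1.symm, h2.symm⟩
end

section
/- The function w_l is a valuation with respect to multiplication: for g₁, g₂ in ℚ[χ]/⟨1+χ+⋯+χ^{2^K-1}⟩ one has w_l(g₁·g₂) = w_l(g₁) + w_l(g₂), where w_l(g) = a + b/2^l with a, b determined by the w_l-normal form of g (and w_l(g) = ∞ if 1+χ^{2^l} divides g). -/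
/-!
Reducing modulo 2 turns `1 + χ^(2^l)` into `(1 - χ)^(2^l)`. Hence for an integral
`G = (1 - χ)^b v₁ + 2 v₂` with `v₁(1)` odd and `b < 2^l`, the exponent `b` is the multiplicity of
the root `1` of `G mod 2`, still visible modulo `(1 - χ)^(2^l)` because `b < 2^l`. Clearing
denominators and comparing two normal forms of the same class modulo 2 first forces equal powers
of 2 and then equal `b`; the same argument shows that a normal form is never divisible by
`1 + χ^(2^l)`. Every nonzero class has a normal form: reduce an integral representative modulo the
monic `1 + χ^(2^l)`, so that its degree, and hence `b`, stays below `2^l`.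

Normal forms multiply: the exponents of `1 - χ` add, and when they reach `2^l` the identity
`(1 - χ)^(2^l) = 1 + χ^(2^l) + 2h` with `h(1) = -1` trades `2^l` factors of `1 - χ` for one factor
of 2, which is exactly what keeps `a + b / 2^l` additive.
-/

noncomputable section
open Polynomial

/-- The quotient ring ℚ[χ]/⟨1+χ^{2^l}⟩. -/
abbrev QS (l : ℕ) := Polynomial ℚ ⧸ Ideal.span {(1 + X ^ (2 ^ l) : Polynomial ℚ)}

def mkS (l : ℕ) : Polynomial ℚ →+* QS l := Ideal.Quotient.mk _

/-- `IsNF K l g w` : g admits a w_l-normal form pr_l(g) = (2^a/u)·((1-χ)^b·v₁ + 2·v₂)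
with u, v₁(1) odd, 0 ≤ b < 2^l, and w = a + b/2^l. -/
def IsNF (K l : ℕ) (g : QB K) (w : ℚ) : Prop :=
  ∃ (p : Polynomial ℚ) (a u : ℤ) (b : ℕ) (v₁ v₂ : Polynomial ℤ),
    mkB K p = g ∧ Odd u ∧ b < 2 ^ l ∧ Odd (v₁.eval 1) ∧
    mkS l p = mkS l (C ((2 : ℚ) ^ a / (u : ℚ)) *
      ((1 - X) ^ b * v₁.map (Int.castRingHom ℚ) + 2 * v₂.map (Int.castRingHom ℚ))) ∧
    w = a + (b : ℚ) / 2 ^ l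

open Classical in
/-- The valuation w_l : w_l(g) = a + b/2^l from the normal form, and ∞ if
1+χ^{2^l} divides g (i.e. no normal form exists). -/
def wl (K l : ℕ) (g : QB K) : WithTop ℚ :=
  if h : ∃ w : ℚ, IsNF K l g w then (h.choose : WithTop ℚ) else ⊤

section PowDvd

variable {R : Type*} [CommRing R] [IsDomain R] {π v v' : R}

theorem not_pow_dvd_pow_mul (hπ : π ≠ 0) (hv : ¬π ∣ v) {b n : ℕ} (hbn : b < n) :
    ¬π ^ n ∣ π ^ b * v := by
  intro h
  apply hv
  rw [← mul_dvd_mul_iff_left (pow_ne_zero b hπ), ← pow_succ]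
  exact (pow_dvd_pow π hbn).trans h

theorem eq_of_pow_dvd_pow_mul_sub_pow_mul (hπ : π ≠ 0) (hv : ¬π ∣ v) (hv' : ¬π ∣ v')
    {b b' n : ℕ} (hb : b < n) (hb' : b' < n) (h : π ^ n ∣ π ^ b * v - π ^ b' * v') : b = b' := by
  wlog hlt : b < b' generalizing b b' v v'
  · rcases (not_lt.1 hlt).lt_or_eq with hlt' | heq
    · exact (this hv' hv hb' hb (dvd_sub_comm.1 h) hlt').symm
    · exact heq.symm
  refine absurd ?_ (not_pow_dvd_pow_mul hπ hv (Nat.lt_succ_self b))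
  have h₁ : π ^ (b + 1) ∣ π ^ b * v - π ^ b' * v' := (pow_dvd_pow π hb).trans h
  have h₂ : π ^ (b + 1) ∣ π ^ b' * v' := (pow_dvd_pow π hlt).mul_right v'
  simpa using h₁.add h₂

end PowDvd

local notation "ρ" => Polynomial.map (Int.castRingHom (ZMod 2))

theorem map_zmod_two_one_sub_X : ρ (1 - X) = X - C 1 := by
  rw [Polynomial.map_sub, Polynomial.map_one, map_X, C_1, ← neg_sub, CharTwo.neg_eq]

theorem map_zmod_two_one_add_X_pow_two_pow (l : ℕ) : ρ (1 + X ^ 2 ^ l) = (X - C 1) ^ 2 ^ l := by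
  rw [sub_pow_char_pow, ← C_pow, one_pow, C_1, CharTwo.sub_eq_add, Polynomial.map_add,
    Polynomial.map_one, Polynomial.map_pow, map_X, add_comm]

theorem map_zmod_two_nf (b : ℕ) (v₁ v₂ : ℤ[X]) :
    ρ ((1 - X) ^ b * v₁ + 2 * v₂) = (X - C 1) ^ b * ρ v₁ := by
  rw [Polynomial.map_add, Polynomial.map_mul, Polynomial.map_mul, Polynomial.map_pow,
    map_zmod_two_one_sub_X, Polynomial.map_ofNat, CharTwo.two_eq_zero (R := (ZMod 2)[X]), zero_mul,
    add_zero]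

theorem map_zmod_two_C_mul_of_odd {u : ℤ} (hu : Odd u) (f : ℤ[X]) : ρ (C u * f) = ρ f := by
  rw [Polynomial.map_mul, map_C, eq_intCast, hu.intCast_zmod_two, C_1, one_mul]

theorem X_sub_C_one_dvd_map_zmod_two_iff (v : ℤ[X]) : X - C 1 ∣ ρ v ↔ Even (v.eval 1) := by
  rw [dvd_iff_isRoot, IsRoot, eval_one_map, Int.coe_castRingHom, ZMod.intCast_eq_zero_iff_even]

theorem not_X_sub_C_one_dvd_map_zmod_two {v : ℤ[X]} (hv : Odd (v.eval 1)) : ¬X - C 1 ∣ ρ v := by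
  rwa [X_sub_C_one_dvd_map_zmod_two_iff, Int.not_even_iff_odd]

theorem two_dvd_of_map_zmod_two_eq_zero {f : ℤ[X]} (h : ρ f = 0) : (2 : ℤ[X]) ∣ f := by
  rw [← C_ofNat, C_dvd_iff_dvd_coeff]
  intro i
  simpa [ZMod.intCast_zmod_eq_zero_iff_dvd] using congrArg (coeff · i) h

theorem map_zmod_two_two_mul (f : ℤ[X]) : ρ (2 * f) = 0 := by
  rw [Polynomial.map_mul, Polynomial.map_ofNat, CharTwo.two_eq_zero (R := (ZMod 2)[X]), zero_mul]

theorem exists_one_sub_X_pow_two_pow_eq (l : ℕ) :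
    ∃ h : ℤ[X], (1 - X) ^ 2 ^ l = 1 + X ^ 2 ^ l + 2 * h ∧ Odd (h.eval 1) := by
  obtain ⟨h, hh⟩ := two_dvd_of_map_zmod_two_eq_zero (f := (1 - X) ^ 2 ^ l - (1 + X ^ 2 ^ l)) (by
    rw [Polynomial.map_sub, Polynomial.map_pow, map_zmod_two_one_sub_X,
      map_zmod_two_one_add_X_pow_two_pow, sub_self])
  refine ⟨h, by linear_combination hh, -1, ?_⟩
  have h1 : (-2 : ℤ) = 2 * h.eval 1 := by simpa using congrArg (eval 1) hh
  omega

theorem Odd.int_ne_zero {u : ℤ} (hu : Odd u) : u ≠ 0 := by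
  rintro rfl
  simp at hu

theorem Int.exists_eq_two_pow_mul_odd {d : ℤ} (hd : d ≠ 0) :
    ∃ (c : ℕ) (u : ℤ), Odd u ∧ d = 2 ^ c * u := by
  have h2 : ¬IsUnit (2 : ℤ) := by decide
  obtain ⟨u, hu, h2u⟩ := (FiniteMultiplicity.of_not_isUnit h2 hd).exists_eq_pow_mul_and_not_dvd
  exact ⟨_, u, Int.not_even_iff_odd.1 (mt even_iff_two_dvd.1 h2u), hu⟩

theorem exists_eq_two_pow_mul_nf {r : ℤ[X]} (hr : r ≠ 0) :
    ∃ (c b : ℕ) (v₁ v₂ : ℤ[X]), b ≤ r.natDegree ∧ Odd (v₁.eval 1) ∧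
      r = 2 ^ c * ((1 - X) ^ b * v₁ + 2 * v₂) := by
  have h2 : ¬IsUnit (2 : ℤ[X]) := by rw [← C_ofNat, isUnit_C]; decide
  obtain ⟨r', hr', hr'2⟩ :=
    (FiniteMultiplicity.of_not_isUnit h2 hr).exists_eq_pow_mul_and_not_dvd
  have hρr' : ρ r' ≠ 0 := mt two_dvd_of_map_zmod_two_eq_zero hr'2
  obtain ⟨w, hw, hw1⟩ := exists_eq_pow_rootMultiplicity_mul_and_not_dvd (ρ r') hρr' 1
  obtain ⟨v₁, rfl⟩ := map_surjective (Int.castRingHom (ZMod 2)) ZMod.intCast_surjective w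
  set b := (ρ r').rootMultiplicity 1
  obtain ⟨v₂, hv₂⟩ := two_dvd_of_map_zmod_two_eq_zero (f := r' - (1 - X) ^ b * v₁) (by
    rw [Polynomial.map_sub, Polynomial.map_mul, Polynomial.map_pow, map_zmod_two_one_sub_X, ← hw,
      sub_self])
  refine ⟨_, b, v₁, v₂, ?_, ?_, by rw [hr']; linear_combination (2 : ℤ[X]) ^ _ * hv₂⟩
  · calc b = ((X - C 1 : (ZMod 2)[X]) ^ b).natDegree := by
          rw [natDegree_pow, natDegree_X_sub_C, mul_one]
      _ ≤ (ρ r').natDegree := natDegree_le_of_dvd (pow_rootMultiplicity_dvd _ _) hρr'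
      _ ≤ r'.natDegree := natDegree_map_le
      _ ≤ r.natDegree := natDegree_le_of_dvd (Dvd.intro_left _ hr'.symm) hr
  · rwa [X_sub_C_one_dvd_map_zmod_two_iff, Int.not_even_iff_odd] at hw1

theorem monic_one_add_X_pow_two_pow {R : Type*} [CommRing R] [Nontrivial R] (l : ℕ) :
    (1 + X ^ 2 ^ l : R[X]).Monic := by
  rw [add_comm, ← C_1]
  exact monic_X_pow_add_C 1 (by positivity)

def mkSInt (l : ℕ) : ℤ[X] →+* QS l := (mkS l).comp (mapRingHom (Int.castRingHom ℚ))

theorem mkSInt_eq_zero_iff {l : ℕ} {f : ℤ[X]} : mkSInt l f = 0 ↔ (1 + X ^ 2 ^ l : ℤ[X]) ∣ f := by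
  rw [← map_dvd_map (Int.castRingHom ℚ) Int.cast_injective (monic_one_add_X_pow_two_pow l), mkSInt,
    RingHom.comp_apply, mkS, Ideal.Quotient.eq_zero_iff_mem, Ideal.mem_span_singleton]
  simp

theorem dvd_map_zmod_two_of_mkSInt_eq_zero {l : ℕ} {f : ℤ[X]} (h : mkSInt l f = 0) :
    (X - C 1) ^ 2 ^ l ∣ ρ f :=
  map_zmod_two_one_add_X_pow_two_pow l ▸ Polynomial.map_dvd _ (mkSInt_eq_zero_iff.1 h)

theorem mkSInt_C_mul (l : ℕ) (n : ℤ) (f : ℤ[X]) :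
    mkSInt l (C n * f) = algebraMap ℚ (QS l) n * mkSInt l f := by
  rw [map_mul, eq_intCast C, map_intCast, map_intCast]

theorem mkSInt_C_mul_sub_C_mul_eq_zero {l : ℕ} {a u u' : ℤ} {e : ℕ} (hu : u ≠ 0) (hu' : u' ≠ 0)
    {f f' : ℤ[X]} (h : algebraMap ℚ (QS l) (2 ^ a / u) * mkSInt l f =
      algebraMap ℚ (QS l) (2 ^ (a + e) / u') * mkSInt l f') :
    mkSInt l (C u' * f - C (u * 2 ^ e) * f') = 0 := by
  have hk : mkSInt l (C u' * f - C (u * 2 ^ e) * f') = algebraMap ℚ (QS l) (u * u' / 2 ^ a) *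
      (algebraMap ℚ (QS l) (2 ^ a / u) * mkSInt l f -
        algebraMap ℚ (QS l) (2 ^ (a + e) / u') * mkSInt l f') := by
    rw [map_sub, mkSInt_C_mul, mkSInt_C_mul, mul_sub, ← mul_assoc, ← mul_assoc, ← map_mul,
      ← map_mul]
    congr 3
    · field_simp
    · rw [zpow_add₀ two_ne_zero, zpow_natCast]
      push_cast
      field_simp
  rw [hk, h, sub_self, mul_zero]

theorem mkSInt_ofNat (l n : ℕ) [n.AtLeastTwo] :
    mkSInt l (OfNat.ofNat n) = algebraMap ℚ (QS l) (OfNat.ofNat n) := by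
  rw [map_ofNat, map_ofNat]

theorem exists_eq_algebraMap_mul_mkSInt (l : ℕ) (x : QS l) :
    ∃ (d : ℤ) (r : ℤ[X]), d ≠ 0 ∧ r.natDegree < 2 ^ l ∧
      x = algebraMap ℚ (QS l) (1 / d) * mkSInt l r := by
  obtain ⟨p, rfl⟩ := Ideal.Quotient.mk_surjective x
  obtain ⟨d, hd, hq⟩ := IsLocalization.integerNormalization_spec (nonZeroDivisors ℤ) p
  have hd0 : (d : ℚ) ≠ 0 := Int.cast_ne_zero.2 (nonZeroDivisors.ne_zero hd)
  set q := IsLocalization.integerNormalization (nonZeroDivisors ℤ) p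
  have hM := monic_one_add_X_pow_two_pow (R := ℤ) l
  have hMdeg : (1 + X ^ 2 ^ l : ℤ[X]).natDegree = 2 ^ l := by
    rw [add_comm, ← C_1, natDegree_X_pow_add_C]
  refine ⟨d, q %ₘ (1 + X ^ 2 ^ l), nonZeroDivisors.ne_zero hd, ?_, ?_⟩
  · have hM1 : (1 + X ^ 2 ^ l : ℤ[X]) ≠ 1 := fun h1 => by
      rw [h1, natDegree_one] at hMdeg
      exact pow_ne_zero l two_ne_zero hMdeg.symm
    exact (natDegree_modByMonic_lt q hM hM1).trans_eq hMdeg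
  · have hqr : mkSInt l (q %ₘ (1 + X ^ 2 ^ l)) = algebraMap ℚ (QS l) d * Ideal.Quotient.mk _ p := by
      rw [modByMonic_eq_sub_mul_div, map_sub, map_mul, mkSInt_eq_zero_iff.2 dvd_rfl, zero_mul,
        sub_zero, mkSInt, RingHom.comp_apply, coe_mapRingHom, ← algebraMap_int_eq, hq,
        zsmul_eq_mul, ← C_eq_intCast, map_mul, mkS]
      rfl
    rw [hqr, ← mul_assoc, ← map_mul, one_div_mul_cancel hd0, map_one, one_mul]

def HasNormalForm (l : ℕ) (x : QS l) (a : ℤ) (b : ℕ) : Prop :=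
  b < 2 ^ l ∧ ∃ (u : ℤ) (v₁ v₂ : ℤ[X]), Odd u ∧ Odd (v₁.eval 1) ∧
    x = algebraMap ℚ (QS l) (2 ^ a / u) * mkSInt l ((1 - X) ^ b * v₁ + 2 * v₂)

namespace HasNormalForm

variable {l : ℕ} {x y : QS l} {a a' a₁ a₂ : ℤ} {b b' b₁ b₂ : ℕ}

theorem ne_zero (h : HasNormalForm l x a b) : x ≠ 0 := by
  obtain ⟨hb, u, v₁, v₂, hu, hv, rfl⟩ := h
  have hq : (2 ^ a / u : ℚ) ≠ 0 :=
    div_ne_zero (zpow_ne_zero _ two_ne_zero) (Int.cast_ne_zero.2 hu.int_ne_zero)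
  rw [Ne, ((IsUnit.mk0 _ hq).map _).mul_right_eq_zero]
  intro h0
  have hdvd := dvd_map_zmod_two_of_mkSInt_eq_zero h0
  rw [map_zmod_two_nf] at hdvd
  exact not_pow_dvd_pow_mul (X_sub_C_ne_zero 1) (not_X_sub_C_one_dvd_map_zmod_two hv) hb hdvd

theorem unique (h : HasNormalForm l x a b) (h' : HasNormalForm l x a' b') : a = a' ∧ b = b' := by
  wlog haa : a ≤ a' generalizing a a' b b'
  · exact (this h' h (le_of_not_ge haa)).imp Eq.symm Eq.symm
  obtain ⟨hb, u, v₁, v₂, hu, hv, rfl⟩ := h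
  obtain ⟨hb', u', v₁', v₂', hu', hv', hx⟩ := h'
  obtain ⟨e, rfl⟩ := Int.le.dest haa
  have hdvd := dvd_map_zmod_two_of_mkSInt_eq_zero
    (mkSInt_C_mul_sub_C_mul_eq_zero hu.int_ne_zero hu'.int_ne_zero hx)
  have hπ : (X - C 1 : (ZMod 2)[X]) ≠ 0 := X_sub_C_ne_zero 1
  have hv₁ := not_X_sub_C_one_dvd_map_zmod_two hv
  rw [Polynomial.map_sub, map_zmod_two_C_mul_of_odd hu', map_zmod_two_nf] at hdvd
  cases e with
  | zero =>
    rw [pow_zero, mul_one, map_zmod_two_C_mul_of_odd hu, map_zmod_two_nf] at hdvd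
    exact ⟨by simp, eq_of_pow_dvd_pow_mul_sub_pow_mul hπ hv₁ (not_X_sub_C_one_dvd_map_zmod_two hv')
      hb hb' hdvd⟩
  | succ e =>
    rw [show C (u * 2 ^ (e + 1)) = 2 * C (u * 2 ^ e) by
        rw [pow_succ, ← mul_assoc, C_mul, C_ofNat, mul_comm],
      mul_assoc, map_zmod_two_two_mul, sub_zero] at hdvd
    exact absurd hdvd (not_pow_dvd_pow_mul hπ hv₁ hb)

theorem mul_of_lt (h₁ : HasNormalForm l x a₁ b₁) (h₂ : HasNormalForm l y a₂ b₂)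
    (hb : b₁ + b₂ < 2 ^ l) :
    HasNormalForm l (x * y) (a₁ + a₂) (b₁ + b₂) := by
  obtain ⟨-, u₁, v₁, v₂, hu₁, hv₁, rfl⟩ := h₁
  obtain ⟨-, u₂, t₁, t₂, hu₂, ht₁, rfl⟩ := h₂
  refine ⟨hb, u₁ * u₂, v₁ * t₁, (1 - X) ^ b₁ * (v₁ * t₂) + (1 - X) ^ b₂ * (t₁ * v₂) + 2 * (v₂ * t₂),
    hu₁.mul hu₂, by rw [eval_mul]; exact hv₁.mul ht₁, ?_⟩
  rw [mul_mul_mul_comm, ← map_mul, ← map_mul, zpow_add₀ two_ne_zero]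
  congr 2
  · push_cast
    ring
  · ring

theorem mul_of_le (h₁ : HasNormalForm l x a₁ b₁) (h₂ : HasNormalForm l y a₂ b₂)
    (hb : 2 ^ l ≤ b₁ + b₂) :
    HasNormalForm l (x * y) (a₁ + a₂ + 1) (b₁ + b₂ - 2 ^ l) := by
  obtain ⟨hb₁, u₁, v₁, v₂, hu₁, hv₁, rfl⟩ := h₁
  obtain ⟨hb₂, u₂, t₁, t₂, hu₂, ht₁, rfl⟩ := h₂
  obtain ⟨h, hh, hh₁⟩ := exists_one_sub_X_pow_two_pow_eq l
  obtain ⟨c, d₁, d₂, rfl, rfl, hn, hd₁, hd₂⟩ : ∃ c d₁ d₂, b₁ = c + d₁ ∧ b₂ = c + d₂ ∧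
      2 ^ l = c + d₁ + d₂ ∧ d₁ ≠ 0 ∧ d₂ ≠ 0 :=
    ⟨b₁ + b₂ - 2 ^ l, 2 ^ l - b₂, 2 ^ l - b₁, by omega, by omega, by omega, by omega, by omega⟩
  have hπ : ((1 - X) ^ c * (1 - X) ^ d₁ * (1 - X) ^ d₂ : ℤ[X]) = 1 + X ^ 2 ^ l + 2 * h := by
    rw [← pow_add, ← pow_add, ← hn, hh]
  set V := h * (v₁ * t₁) + (1 - X) ^ d₁ * (v₁ * t₂) + (1 - X) ^ d₂ * (t₁ * v₂)
  have hprod : ((1 - X) ^ (c + d₁) * v₁ + 2 * v₂) * ((1 - X) ^ (c + d₂) * t₁ + 2 * t₂) =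
      (1 + X ^ 2 ^ l) * ((1 - X) ^ c * (v₁ * t₁)) + 2 * ((1 - X) ^ c * V + 2 * (v₂ * t₂)) := by
    linear_combination ((1 - X) ^ c * (v₁ * t₁)) * hπ
  refine ⟨by omega, u₁ * u₂, V, v₂ * t₂, hu₁.mul hu₂, ?_, ?_⟩
  · simpa [V, zero_pow hd₁, zero_pow hd₂] using hh₁.mul (hv₁.mul ht₁)
  rw [mul_mul_mul_comm, ← map_mul, ← map_mul, hprod, map_add,
    mkSInt_eq_zero_iff.2 (dvd_mul_right _ _), zero_add, map_mul (mkSInt l) 2, mkSInt_ofNat,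
    ← mul_assoc, ← map_mul, show c + d₁ + (c + d₂) - 2 ^ l = c by omega,
    zpow_add₀ two_ne_zero, zpow_add₀ two_ne_zero]
  congr 2
  push_cast
  ring

theorem mul (h₁ : HasNormalForm l x a₁ b₁) (h₂ : HasNormalForm l y a₂ b₂) :
    ∃ a b, HasNormalForm l (x * y) a b ∧
      (a + b / 2 ^ l : ℚ) = a₁ + b₁ / 2 ^ l + (a₂ + b₂ / 2 ^ l) := by
  rcases lt_or_ge (b₁ + b₂) (2 ^ l) with hb | hb
  · refine ⟨_, _, h₁.mul_of_lt h₂ hb, ?_⟩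
    push_cast
    ring
  · refine ⟨_, _, h₁.mul_of_le h₂ hb, ?_⟩
    rw [Nat.cast_sub hb]
    push_cast
    field_simp
    ring

end HasNormalForm

theorem exists_hasNormalForm {l : ℕ} {x : QS l} (hx : x ≠ 0) : ∃ a b, HasNormalForm l x a b := by
  obtain ⟨d, r, hd, hr, rfl⟩ := exists_eq_algebraMap_mul_mkSInt l x
  have hr0 : r ≠ 0 := by
    rintro rfl
    simp at hx
  obtain ⟨c, b, v₁, v₂, hb, hv, rfl⟩ := exists_eq_two_pow_mul_nf hr0
  obtain ⟨c', u, hu, rfl⟩ := Int.exists_eq_two_pow_mul_odd hd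
  refine ⟨c - c', b, hb.trans_lt hr, u, v₁, v₂, hu, hv, ?_⟩
  rw [map_mul, ← mul_assoc, map_pow, mkSInt_ofNat, ← map_pow, ← map_mul,
    zpow_sub₀ two_ne_zero, zpow_natCast, zpow_natCast]
  congr 2
  push_cast
  field_simp

theorem geom_sum_two_pow_eq_prod {R : Type*} [CommRing R] (x : R) (K : ℕ) :
    ∑ i ∈ Finset.range (2 ^ K), x ^ i = ∏ j ∈ Finset.range K, (1 + x ^ 2 ^ j) := by
  induction K with
  | zero => simp
  | succ K ih =>
    rw [Finset.prod_range_succ, ← ih, pow_succ, mul_two, Finset.sum_range_add]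
    simp only [pow_add, ← Finset.mul_sum]
    ring

def pr (l : ℕ) {K : ℕ} (hlK : l < K) : QB K →+* QS l :=
  Ideal.Quotient.factor <| Ideal.span_singleton_le_span_singleton.2 <| by
    rw [geom_sum_two_pow_eq_prod]
    exact Finset.dvd_prod_of_mem _ (Finset.mem_range.2 hlK)

theorem pr_mkB {l K : ℕ} (hlK : l < K) (p : ℚ[X]) : pr l hlK (mkB K p) = mkS l p :=
  Ideal.Quotient.factor_mk _ _

theorem mkS_C_mul_normalForm (l : ℕ) (q : ℚ) (b : ℕ) (v₁ v₂ : ℤ[X]) :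
    mkS l (C q * ((1 - X) ^ b * v₁.map (Int.castRingHom ℚ) + 2 * v₂.map (Int.castRingHom ℚ))) =
      algebraMap ℚ (QS l) q * mkSInt l ((1 - X) ^ b * v₁ + 2 * v₂) := by
  rw [map_mul, mkSInt, RingHom.comp_apply, coe_mapRingHom, Polynomial.map_add, Polynomial.map_mul,
    Polynomial.map_mul, Polynomial.map_pow, Polynomial.map_sub, Polynomial.map_one, map_X,
    Polynomial.map_ofNat]
  rfl

theorem isNF_iff {K l : ℕ} (hlK : l < K) {g : QB K} {w : ℚ} :
    IsNF K l g w ↔ ∃ a b, HasNormalForm l (pr l hlK g) a b ∧ w = a + (b : ℚ) / 2 ^ l := by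
  constructor
  · rintro ⟨p, a, u, b, v₁, v₂, rfl, hu, hb, hv, hp, rfl⟩
    exact ⟨a, b, ⟨hb, u, v₁, v₂, hu, hv, by rw [pr_mkB, hp, mkS_C_mul_normalForm]⟩, rfl⟩
  · rintro ⟨a, b, ⟨hb, u, v₁, v₂, hu, hv, hg⟩, rfl⟩
    obtain ⟨p, rfl⟩ := Ideal.Quotient.mk_surjective g
    exact ⟨p, a, u, b, v₁, v₂, rfl, hu, hb, hv, by rw [mkS_C_mul_normalForm, ← hg]; rfl, rfl⟩

theorem wl_eq_top_of_pr_eq_zero {K l : ℕ} (hlK : l < K) {g : QB K} (hg : pr l hlK g = 0) :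
    wl K l g = ⊤ := by
  rw [wl, dif_neg]
  rintro ⟨w, hw⟩
  obtain ⟨a, b, h, -⟩ := (isNF_iff hlK).1 hw
  exact h.ne_zero hg

theorem wl_eq_of_hasNormalForm {K l : ℕ} (hlK : l < K) {g : QB K} {a : ℤ} {b : ℕ}
    (h : HasNormalForm l (pr l hlK g) a b) : wl K l g = ((a + b / 2 ^ l : ℚ) : WithTop ℚ) := by
  have hex : ∃ w, IsNF K l g w := ⟨_, (isNF_iff hlK).2 ⟨a, b, h, rfl⟩⟩
  obtain ⟨a', b', h', hw⟩ := (isNF_iff hlK).1 hex.choose_spec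
  obtain ⟨rfl, rfl⟩ := h.unique h'
  rw [wl, dif_pos hex, hw]

/-- w_l is multiplicative: w_l(g₁·g₂) = w_l(g₁) + w_l(g₂) (with x + ∞ = ∞). -/
theorem stmt10 (K l : ℕ) (hK : 1 ≤ K) (hl : l ≤ K - 1) (g₁ g₂ : QB K) :
    wl K l (g₁ * g₂) = wl K l g₁ + wl K l g₂ := by
  have hlK : l < K := by omega
  by_cases h₁ : pr l hlK g₁ = 0
  · rw [wl_eq_top_of_pr_eq_zero hlK h₁,
      wl_eq_top_of_pr_eq_zero hlK (by rw [map_mul, h₁, zero_mul]), top_add]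
  by_cases h₂ : pr l hlK g₂ = 0
  · rw [wl_eq_top_of_pr_eq_zero hlK h₂,
      wl_eq_top_of_pr_eq_zero hlK (by rw [map_mul, h₂, mul_zero]), add_top]
  obtain ⟨a₁, b₁, hg₁⟩ := exists_hasNormalForm h₁
  obtain ⟨a₂, b₂, hg₂⟩ := exists_hasNormalForm h₂
  obtain ⟨a, b, hg, hw⟩ := hg₁.mul hg₂
  rw [wl_eq_of_hasNormalForm hlK hg₁, wl_eq_of_hasNormalForm hlK hg₂,
    wl_eq_of_hasNormalForm hlK (by rwa [map_mul]), hw, WithTop.coe_add]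
end
end

section
/- Sufficient divisibility criterion: let N = 2^K and g ∈ ℚ[χ]/⟨1+χ+⋯+χ^{N-1}⟩ with pr_l(g) ∈ 4·ℤ[χ]/⟨1+χ^{2^l}⟩ for all 0 ≤ l ≤ K-1. If w_l(g) ≥ 2 + K - l - 2^{-l} for all 0 ≤ l ≤ K-1, then g lies in 4·ℤ[χ]/⟨1+χ+⋯+χ^{N-1}⟩. -/
noncomputable section
open Polynomial

/-!
Write `Φ l = 1 + X ^ 2 ^ l`, so that `Ψ K = 1 + X + ⋯ + X ^ (2 ^ K - 1) = ∏_{l < K} Φ l`,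
and `pr_l(g) = 4 z_l`. As `Φ j ≡ 2 (mod Φ l)` for `j > l`, the cofactor `Ψ K / Φ l` is
congruent to `2 ^ (K-1-l) Ψ l`, and `(1 - X) Ψ l = 2 - Φ l`. The bound on `w_l(g)` makes the
normal form of `pr_l(g)` equal to `2 ^ (K-l+1) / u` times a multiple of `Ψ l` modulo `Φ l`,
with `u` odd: the second factor is either even, and `2 ≡ (1 - X) Ψ l`, or a multiple of
`(1 - X) ^ (2 ^ l - 1) v₁ + 2 v₂`, and `(1 - X) ^ (2 ^ l - 1) ≡ Ψ l (mod 2)`. Hence `u z_l` is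
congruent to a multiple of the cofactor. Since the `Φ l` are pairwise coprime over `ℚ`, these
congruences glue to `U g ∈ 4ℤ[X]` with `U = ∏ u_l` odd; gluing
`2 ^ K z_l ≡ cofactor · 2 ^ l (1 - X) z_l` instead gives `2 ^ (K²) g ∈ 4ℤ[X]`. As `U` is odd,
`g ∈ 4ℤ[X]`.
-/

namespace FourDivisibility

open Finset

local notation "Φ" l:max => cyclotomic (2 ^ (l + 1)) ℤ

local notation "Ψ" K:max => ∑ i ∈ range (2 ^ K), (X : ℤ[X]) ^ i

abbrev toQ : ℤ[X] →+* ℚ[X] := mapRingHom (Int.castRingHom ℚ)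

lemma cyclotomic_two_pow_succ (R : Type*) [CommRing R] (l : ℕ) :
    cyclotomic (2 ^ (l + 1)) R = 1 + X ^ 2 ^ l := by
  simp [cyclotomic_prime_pow_eq_geom_sum Nat.prime_two, sum_range_succ]

lemma geom_sum_two_pow_succ {R : Type*} [CommRing R] (x : R) (K : ℕ) :
    ∑ i ∈ range (2 ^ (K + 1)), x ^ i = (∑ i ∈ range (2 ^ K), x ^ i) * (1 + x ^ 2 ^ K) := by
  rw [pow_succ, mul_two, sum_range_add]
  simp only [pow_add, ← mul_sum]
  ring

lemma geom_sum_two_pow_eq_prod (K : ℕ) : Ψ K = ∏ l ∈ range K, Φ l := by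
  induction K with
  | zero => simp
  | succ K ih => rw [geom_sum_two_pow_succ, ih, prod_range_succ, cyclotomic_two_pow_succ]

lemma cyclotomic_dvd_geom_sum {l K : ℕ} (hl : l < K) : Φ l ∣ Ψ K := by
  rw [geom_sum_two_pow_eq_prod]
  exact dvd_prod_of_mem _ (mem_range.2 hl)

lemma one_sub_X_mul_geom_sum (l : ℕ) : (1 - X) * Ψ l = 2 - Φ l := by
  rw [mul_neg_geom_sum, cyclotomic_two_pow_succ]
  ring

lemma cyclotomic_dvd_cyclotomic_sub_two {l j : ℕ} (h : l < j) : Φ l ∣ Φ j - 2 := by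
  have : Φ j - 2 = Ψ j * (X - 1) := by rw [geom_sum_mul, cyclotomic_two_pow_succ]; ring
  rw [this]
  exact (cyclotomic_dvd_geom_sum h).mul_right _

lemma dvd_prod_sub_pow_card {R ι : Type*} [CommRing R] {d c : R} {f : ι → R} {s : Finset ι}
    (h : ∀ j ∈ s, d ∣ f j - c) : d ∣ ∏ j ∈ s, f j - c ^ #s := by
  classical
  induction s using Finset.induction with
  | empty => simp
  | insert a s ha ih =>
    rw [prod_insert ha, card_insert_of_notMem ha, pow_succ]
    have key : f a * ∏ j ∈ s, f j - c ^ #s * c =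
        (f a - c) * ∏ j ∈ s, f j + c * (∏ j ∈ s, f j - c ^ #s) := by ring
    rw [key]
    exact dvd_add ((h a (mem_insert_self a s)).mul_right _)
      ((ih fun j hj => h j (mem_insert_of_mem hj)).mul_left _)

/-- `Ψ K / Φ l` for `l < K`, in a form where its residue modulo `Φ l` can be read off. -/
def cofactor (l K : ℕ) : ℤ[X] := Ψ l * ∏ j ∈ Ico (l + 1) K, Φ j

lemma cyclotomic_dvd_cofactor {l j K : ℕ} (hlj : l ≠ j) (hl : l < K) :
    Φ l ∣ cofactor j K := by
  rcases hlj.lt_or_gt with hlt | hgt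
  · exact (cyclotomic_dvd_geom_sum hlt).mul_right _
  · exact (dvd_prod_of_mem _ (mem_Ico.2 ⟨hgt, hl⟩)).mul_left _

lemma cyclotomic_dvd_cofactor_sub (l K : ℕ) : Φ l ∣ cofactor l K - 2 ^ (K - 1 - l) * Ψ l := by
  have h := dvd_prod_sub_pow_card (s := Ico (l + 1) K)
    fun j hj => cyclotomic_dvd_cyclotomic_sub_two (mem_Ico.1 hj).1
  rw [Nat.card_Ico, show K - (l + 1) = K - 1 - l by omega] at h
  rw [cofactor, mul_comm _ (Ψ l), ← mul_sub]
  exact h.mul_left _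

lemma two_dvd_sub_of_map_eq {f g : ℤ[X]}
    (h : f.map (Int.castRingHom (ZMod 2)) = g.map (Int.castRingHom (ZMod 2))) :
    (2 : ℤ[X]) ∣ f - g := by
  rw [← C_ofNat, C_dvd_iff_dvd_coeff]
  intro i
  have := congrArg (coeff · i) h
  simp only [coeff_map] at this
  rw [coeff_sub]
  exact (ZMod.intCast_eq_intCast_iff_dvd_sub _ _ 2).1 this.symm

lemma exists_one_sub_X_pow_eq_geom_sum_add (l : ℕ) :
    ∃ R : ℤ[X], (1 - X) ^ (2 ^ l - 1) = Ψ l + 2 * R := by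
  suffices h : ((1 - X) ^ (2 ^ l - 1) : ℤ[X]).map (Int.castRingHom (ZMod 2)) =
      (Ψ l).map (Int.castRingHom (ZMod 2)) by
    obtain ⟨R, hR⟩ := two_dvd_sub_of_map_eq h
    exact ⟨R, by linear_combination hR⟩
  have hX : (1 - X : (ZMod 2)[X]) ≠ 0 := by
    rw [← neg_sub, neg_ne_zero, ← C_1]
    exact X_sub_C_ne_zero 1
  apply mul_left_cancel₀ hX
  simp only [Polynomial.map_pow, Polynomial.map_sub, Polynomial.map_one, Polynomial.map_X,
    Polynomial.map_sum, mul_neg_geom_sum]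
  rw [← pow_succ', Nat.sub_add_cancel Nat.one_le_two_pow, sub_pow_char_pow, one_pow]

lemma cyclotomic_dvd_two_mul_sub (l : ℕ) (f : ℤ[X]) : Φ l ∣ 2 * f - Ψ l * ((1 - X) * f) :=
  ⟨f, by linear_combination (-f) * one_sub_X_mul_geom_sum l⟩

lemma exists_cyclotomic_dvd_sub_geom_sum_mul (l : ℕ) (v₁ v₂ : ℤ[X]) :
    ∃ s, Φ l ∣ (1 - X) ^ (2 ^ l - 1) * v₁ + 2 * v₂ - Ψ l * s := by
  obtain ⟨R, hR⟩ := exists_one_sub_X_pow_eq_geom_sum_add l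
  obtain ⟨c, hc⟩ := cyclotomic_dvd_two_mul_sub l (R * v₁ + v₂)
  exact ⟨v₁ + (1 - X) * (R * v₁ + v₂), c, by linear_combination v₁ * hR + hc⟩

lemma cyclotomic_dvd_two_pow_mul_sub_cofactor_mul {l K : ℕ} {f s : ℤ[X]}
    (h : Φ l ∣ f - Ψ l * s) : Φ l ∣ 2 ^ (K - 1 - l) * f - cofactor l K * s := by
  obtain ⟨c, hc⟩ := h
  obtain ⟨d, hd⟩ := cyclotomic_dvd_cofactor_sub l K
  exact ⟨2 ^ (K - 1 - l) * c - s * d, by linear_combination 2 ^ (K - 1 - l) * hc - s * hd⟩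

lemma cyclotomic_dvd_two_pow_mul_sub_cofactor {l K : ℕ} (hl : l < K) (z : ℤ[X]) :
    Φ l ∣ 2 ^ K * z - cofactor l K * (2 ^ l * ((1 - X) * z)) := by
  have h := cyclotomic_dvd_two_pow_mul_sub_cofactor_mul (K := K)
    (cyclotomic_dvd_two_mul_sub l (2 ^ l * z))
  rw [show (2 : ℤ[X]) ^ K = 2 ^ (K - 1 - l) * 2 * 2 ^ l by
    rw [← pow_succ, ← pow_add]; congr 1; omega]
  convert h using 2 <;> ring

lemma exists_eq_X_pow_mul_add_two_mul (T : ℤ[X]) (hT : ¬ (2 : ℤ[X]) ∣ T) :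
    ∃ (b : ℕ) (V E : ℤ[X]), T = X ^ b * V + 2 * E ∧ Odd (V.coeff 0) := by
  obtain ⟨n, hn⟩ : ∃ n, T.natDegree < n := ⟨_, lt_add_one _⟩
  induction n generalizing T with
  | zero => omega
  | succ n ih =>
    by_cases h0 : Odd (T.coeff 0)
    · exact ⟨0, T, 0, by simp, h0⟩
    obtain ⟨c, hc⟩ := even_iff_two_dvd.1 (Int.not_odd_iff_even.1 h0)
    have hT' : T = X * T.divX + 2 * C c := by rw [← C_ofNat, ← C_mul, ← hc, X_mul_divX_add]
    have hdivX : ¬ (2 : ℤ[X]) ∣ T.divX := fun ⟨D, hD⟩ =>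
      hT ⟨X * D + C c, by rw [hT', hD]; ring⟩
    have hdeg : T.natDegree ≠ 0 := fun h =>
      hdivX (by rw [divX_eq_zero_iff.2 (eq_C_of_natDegree_eq_zero h)]; exact dvd_zero 2)
    obtain ⟨b, V, E, hV, hV0⟩ :=
      ih T.divX hdivX (by rw [natDegree_divX_eq_natDegree_tsub_one]; omega)
    exact ⟨b + 1, V, X * E + C c, by rw [hT', hV]; ring, hV0⟩

lemma comp_one_sub_X_comp_one_sub_X {R : Type*} [CommRing R] (S : R[X]) :
    (S.comp (1 - X)).comp (1 - X) = S := by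
  rw [comp_assoc, sub_comp, one_comp, X_comp, sub_sub_cancel, comp_X]

lemma natDegree_cyclotomic_two_pow (l : ℕ) : (Φ l).natDegree = 2 ^ l := by
  rw [natDegree_cyclotomic, Nat.totient_prime_pow_succ Nat.prime_two]
  simp

/-- Reduce modulo `Φ l`, split off the power of `2` dividing all coefficients, and expand the rest
in powers of `1 - X`: `b` is the index of its first odd coefficient. -/
lemma exists_normalForm_int {l : ℕ} {S : ℤ[X]} (hS : ¬ Φ l ∣ S) :
    ∃ (a b : ℕ) (v₁ v₂ : ℤ[X]), b < 2 ^ l ∧ Odd (v₁.eval 1) ∧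
      Φ l ∣ S - 2 ^ a * ((1 - X) ^ b * v₁ + 2 * v₂) := by
  have hmonic := cyclotomic.monic (2 ^ (l + 1)) ℤ
  have hr : S %ₘ Φ l ≠ 0 := fun h => hS ((modByMonic_eq_zero_iff_dvd hmonic).1 h)
  have h2 : ¬ IsUnit (2 : ℤ[X]) := by
    rw [← C_ofNat, isUnit_C]; decide
  obtain ⟨a, S', hS', hr'⟩ := WfDvdMonoid.max_power_factor' hr h2
  have hT : ¬ (2 : ℤ[X]) ∣ S'.comp (1 - X) := fun ⟨D, hD⟩ =>
    hS' ⟨D.comp (1 - X), by rw [← comp_one_sub_X_comp_one_sub_X S', hD, mul_comp]; simp⟩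
  obtain ⟨b, V, E, hV, hV0⟩ := exists_eq_X_pow_mul_add_two_mul _ hT
  have hb : b < 2 ^ l := by
    have hcoeff : (S'.comp (1 - X)).coeff b ≠ 0 := by
      rw [hV, coeff_add, coeff_X_pow_mul', if_pos le_rfl, Nat.sub_self, ← C_ofNat, coeff_C_mul]
      intro h
      exact Int.not_even_iff_odd.2 hV0 ⟨-E.coeff b, by linarith⟩
    calc b ≤ (S'.comp (1 - X)).natDegree := le_natDegree_of_ne_zero hcoeff
      _ = S'.natDegree := by
        rw [natDegree_comp, natDegree_sub_eq_right_of_natDegree_lt] <;> simp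
      _ ≤ (S %ₘ Φ l).natDegree := natDegree_le_of_dvd (Dvd.intro_left _ hr'.symm) hr
      _ < 2 ^ l := natDegree_cyclotomic_two_pow l ▸
          natDegree_lt_natDegree hr (degree_modByMonic_lt _ hmonic)
  refine ⟨a, b, V.comp (1 - X), E.comp (1 - X), hb, ?_, ?_⟩
  · simpa [eval_comp, coeff_zero_eq_eval_zero] using hV0
  have hS'eq : S' = (1 - X) ^ b * V.comp (1 - X) + 2 * E.comp (1 - X) := by
    rw [← comp_one_sub_X_comp_one_sub_X S', hV]
    simp [add_comp, mul_comp]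
  refine ⟨S /ₘ Φ l, ?_⟩
  rw [← hS'eq, ← hr']
  linear_combination -(modByMonic_add_div S (Φ l))

lemma mkS_eq_iff {l : ℕ} {f g : ℚ[X]} : mkS l f = mkS l g ↔ toQ (Φ l) ∣ f - g := by
  rw [mkS, Ideal.Quotient.eq, Ideal.mem_span_singleton]
  simp [cyclotomic_two_pow_succ]

lemma mkB_eq_iff {K : ℕ} {f g : ℚ[X]} : mkB K f = mkB K g ↔ toQ (Ψ K) ∣ f - g := by
  rw [mkB, Ideal.Quotient.eq, Ideal.mem_span_singleton]
  simp

lemma cyclotomic_dvd_of_map_dvd_C_mul {l : ℕ} {c : ℚ} (hc : c ≠ 0) {f : ℤ[X]}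
    (h : toQ (Φ l) ∣ C c * toQ f) : Φ l ∣ f :=
  (map_dvd_map _ Int.cast_injective (cyclotomic.monic _ ℤ)).1 ((dvd_C_mul hc).1 h)

lemma exists_map_eq_C_mul (p : ℚ[X]) :
    ∃ d : ℤ, d ≠ 0 ∧ ∃ P : ℤ[X], toQ P = C (d : ℚ) * p := by
  obtain ⟨d, hd, hP⟩ := IsLocalization.integerNormalization_spec (nonZeroDivisors ℤ) p
  refine ⟨d, nonZeroDivisors.ne_zero hd,
    (IsLocalization.integerNormalization (nonZeroDivisors ℤ) p : ℤ[X]), ?_⟩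
  rw [coe_mapRingHom, ← algebraMap_int_eq, hP, zsmul_eq_mul, ← C_eq_intCast]

lemma exists_isNF {K l : ℕ} {p : ℚ[X]} (hp : ¬ toQ (Φ l) ∣ p) :
    ∃ w, IsNF K l (mkB K p) w := by
  obtain ⟨d, hd, P, hP⟩ := exists_map_eq_C_mul p
  have hd' : (d : ℚ) ≠ 0 := Int.cast_ne_zero.2 hd
  have hPΦ : ¬ Φ l ∣ P := fun h => hp ((dvd_C_mul hd').1 (hP ▸ map_dvd toQ h))
  obtain ⟨a, b, v₁, v₂, hb, hv₁, hdvd⟩ := exists_normalForm_int hPΦ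
  obtain ⟨n, u, hu, rfl⟩ := WfDvdMonoid.max_power_factor' hd (by decide : ¬ IsUnit (2 : ℤ))
  refine ⟨_, p, a - n, u, b, v₁, v₂, rfl, Int.not_even_iff_odd.1 (even_iff_two_dvd.not.2 hu),
    hb, hv₁, mkS_eq_iff.2 ?_, rfl⟩
  have hY : toQ ((1 - X) ^ b * v₁ + 2 * v₂) =
      (1 - X) ^ b * v₁.map (Int.castRingHom ℚ) + 2 * v₂.map (Int.castRingHom ℚ) := by simp
  have h := map_dvd toQ hdvd
  rw [map_sub, map_mul, hP, hY, map_pow, map_ofNat] at h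
  convert h.mul_left (C ((2 ^ n * u : ℤ) : ℚ)⁻¹) using 1
  have h2 : (2 : ℚ[X]) ^ a = C (2 ^ a) := by rw [C_pow, map_ofNat]
  rw [mul_sub, ← mul_assoc, ← C_mul, inv_mul_cancel₀ hd', C_1, one_mul, h2, ← mul_assoc,
    ← C_mul]
  congr 3
  rw [zpow_sub₀ two_ne_zero, zpow_natCast, zpow_natCast]
  push_cast
  field_simp

lemma exists_eq_add_of_le_add_div {K l b : ℕ} {a : ℤ} (hb : b < 2 ^ l)
    (h : 2 + (K : ℚ) - l - 2 ^ (-(l : ℤ)) ≤ a + b / 2 ^ l) :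
    ∃ e : ℕ, a = K - l + 1 + e ∧ (1 ≤ e ∨ b = 2 ^ l - 1) := by
  have hm : (0 : ℚ) < 2 ^ l := by positivity
  have hQ : ((K : ℚ) - l + 1) * 2 ^ l + 2 ^ l - 1 ≤ a * 2 ^ l + b := by
    rw [zpow_neg, zpow_natCast] at h
    have := mul_le_mul_of_nonneg_right h hm.le
    field_simp at this
    linarith
  have hZ : ((K : ℤ) - l + 1) * 2 ^ l + 2 ^ l - 1 ≤ a * 2 ^ l + b := by exact_mod_cast hQ
  have hb' : (b : ℤ) < 2 ^ l := by exact_mod_cast hb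
  have hm' : (0 : ℤ) < 2 ^ l := by positivity
  have hca : (K : ℤ) - l + 1 ≤ a := by
    by_contra! hlt
    nlinarith
  refine ⟨(a - (K - l + 1)).toNat, by omega, ?_⟩
  rcases Nat.eq_zero_or_pos (a - (K - l + 1)).toNat with h0 | h0
  · right
    have : a = K - l + 1 := by omega
    subst this
    have : (2 : ℤ) ^ l - 1 ≤ b := by linarith
    zify [Nat.one_le_two_pow]
    omega
  · exact Or.inl h0

lemma exists_dvd_sub_cofactor_mul_of_normalForm {K l b : ℕ} {a u : ℤ} (hl : l < K) (hu : Odd u)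
    (hb : b < 2 ^ l) {z v₁ v₂ : ℤ[X]}
    (h : toQ (Φ l) ∣ 4 * toQ z - C ((2 : ℚ) ^ a / u) * toQ ((1 - X) ^ b * v₁ + 2 * v₂))
    (hw : 2 + (K : ℚ) - l - 2 ^ (-(l : ℤ)) ≤ a + b / 2 ^ l) :
    ∃ y, Φ l ∣ u * z - cofactor l K * y := by
  obtain ⟨e, rfl, he⟩ := exists_eq_add_of_le_add_div hb hw
  set Y := (1 - X) ^ b * v₁ + 2 * v₂
  have hu0 : (u : ℚ) ≠ 0 := Int.cast_ne_zero.2 (by rintro rfl; simp at hu)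
  have hz : Φ l ∣ u * z - 2 ^ (K - 1 - l) * (2 ^ e * Y) := by
    refine cyclotomic_dvd_of_map_dvd_C_mul (c := 4 / u) (by positivity) ?_
    have ha : (2 : ℚ) ^ ((K : ℤ) - l + 1 + e) = 4 * (2 ^ (K - 1 - l) * 2 ^ e) := by
      rw [show (K : ℤ) - l + 1 + e = ((K - 1 - l + e + 2 : ℕ) : ℤ) by omega, zpow_natCast,
        pow_add, pow_add]
      ring
    convert h using 1
    simp only [map_sub, map_mul, map_pow, map_intCast, map_ofNat, ha]
    have h4 : C (4 / u : ℚ) * (u : ℚ[X]) = 4 := by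
      rw [← C_eq_intCast, ← C_mul, div_mul_cancel₀ _ hu0, map_ofNat]
    rw [show (4 * (2 ^ (K - 1 - l) * 2 ^ e) / u : ℚ) = 4 / u * (2 ^ (K - 1 - l) * 2 ^ e) by ring,
      C_mul, show C ((2 : ℚ) ^ (K - 1 - l) * 2 ^ e) = 2 ^ (K - 1 - l) * 2 ^ e by
        rw [C_mul, C_pow, C_pow, map_ofNat]]
    linear_combination toQ z * h4
  obtain ⟨s, hs⟩ : ∃ s, Φ l ∣ 2 ^ e * Y - Ψ l * s := by
    rcases he with he | rfl
    · obtain ⟨e, rfl⟩ := Nat.exists_eq_add_of_le' he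
      exact ⟨(1 - X) * (2 ^ e * Y), by
        simpa [pow_succ, mul_assoc, mul_comm] using cyclotomic_dvd_two_mul_sub l (2 ^ e * Y)⟩
    · obtain ⟨s, hs⟩ := exists_cyclotomic_dvd_sub_geom_sum_mul l v₁ v₂
      exact ⟨2 ^ e * s, by simpa [mul_sub, mul_left_comm] using hs.mul_left (2 ^ e)⟩
  exact ⟨s, by simpa using hz.add (cyclotomic_dvd_two_pow_mul_sub_cofactor_mul (K := K) hs)⟩

lemma exists_odd_mul_dvd_sub_cofactor_mul {K l : ℕ} (hl : l < K) {p : ℚ[X]} {z : ℤ[X]}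
    (hz : toQ (Φ l) ∣ p - 4 * toQ z)
    (hw : ((2 + (K : ℚ) - l - 2 ^ (-(l : ℤ)) : ℚ) : WithTop ℚ) ≤ wl K l (mkB K p)) :
    ∃ u : ℤ, Odd u ∧ ∃ y, Φ l ∣ u * z - cofactor l K * y := by
  by_cases hp : toQ (Φ l) ∣ p
  · refine ⟨1, odd_one, 0, ?_⟩
    have h4 : toQ (Φ l) ∣ C 4 * toQ z := by rw [map_ofNat]; simpa using dvd_sub hp hz
    simpa using cyclotomic_dvd_of_map_dvd_C_mul four_ne_zero h4
  have hNF := exists_isNF (K := K) hp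
  rw [wl, dif_pos hNF] at hw
  obtain ⟨p', a, u, b, v₁, v₂, hp', hu, hb, -, hcong, hw'⟩ := hNF.choose_spec
  rw [hw', WithTop.coe_le_coe] at hw
  refine ⟨u, hu,
    exists_dvd_sub_cofactor_mul_of_normalForm (v₁ := v₁) (v₂ := v₂) hl hu hb ?_ hw⟩
  have hpp' : toQ (Φ l) ∣ p' - p :=
    (map_dvd toQ (cyclotomic_dvd_geom_sum hl)).trans (mkB_eq_iff.1 hp')
  convert ((mkS_eq_iff.1 hcong).sub hpp').sub hz using 1
  simp

/-- The `Φ l` are coprime over `ℚ` but not over `ℤ` (there `Φ j ≡ 2 mod Φ l`), so the local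
congruences can only be glued after multiplying by `∏ c l`. -/
lemma exists_dvd_prod_mul_sub_four_mul {K : ℕ} {p : ℚ[X]} {z y : ℕ → ℤ[X]}
    {c : ℕ → ℤ}
    (hz : ∀ l < K, toQ (Φ l) ∣ p - 4 * toQ (z l))
    (hc : ∀ l < K, Φ l ∣ c l * z l - cofactor l K * y l) :
    ∃ z' : ℤ[X], toQ (Ψ K) ∣ (∏ l ∈ range K, c l : ℤ) * p - 4 * toQ z' := by
  set z' := ∑ j ∈ range K, (∏ i ∈ (range K).erase j, (c i : ℤ[X])) * (cofactor j K * y j)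
    with hz'
  have hint : ∀ l < K, Φ l ∣ (∏ i ∈ range K, (c i : ℤ[X])) * z l - z' := by
    intro l hl
    have hmem : l ∈ range K := mem_range.2 hl
    have hrest : Φ l ∣ ∑ j ∈ (range K).erase l,
        (∏ i ∈ (range K).erase j, (c i : ℤ[X])) * (cofactor j K * y j) :=
      dvd_sum fun j hj =>
        ((cyclotomic_dvd_cofactor (ne_of_mem_erase hj).symm hl).mul_right _).mul_left _
    rw [hz', ← mul_prod_erase _ _ hmem, ← add_sum_erase _ _ hmem]
    convert ((hc l hl).mul_left (∏ i ∈ (range K).erase l, (c i : ℤ[X]))).sub hrest using 1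
    ring
  refine ⟨z', ?_⟩
  rw [geom_sum_two_pow_eq_prod, map_prod]
  refine prod_dvd_of_coprime (fun i _ j _ hij => ?_) fun l hl => ?_
  · simpa [map_cyclotomic] using cyclotomic.isCoprime_rat fun h =>
      hij (Nat.succ_injective (Nat.pow_right_injective le_rfl h))
  · convert ((hz l (mem_range.1 hl)).mul_left ((∏ i ∈ range K, c i : ℤ) : ℚ[X])).add
      ((map_dvd toQ (hint l (mem_range.1 hl))).mul_left 4) using 1
    simp [Polynomial.map_prod]
    ring

lemma exists_dvd_sub_four_mul_of_isCoprime {d p : ℚ[X]} {m n : ℤ} (hmn : IsCoprime m n)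
    (hm : ∃ z : ℤ[X], d ∣ m * p - 4 * toQ z) (hn : ∃ z : ℤ[X], d ∣ n * p - 4 * toQ z) :
    ∃ z : ℤ[X], d ∣ p - 4 * toQ z := by
  obtain ⟨α, β, h⟩ := hmn
  obtain ⟨z₁, h₁⟩ := hm
  obtain ⟨z₂, h₂⟩ := hn
  refine ⟨α * z₁ + β * z₂, ?_⟩
  have h' : (α : ℚ[X]) * m + β * n = 1 := by exact_mod_cast h
  convert (h₁.mul_left (α : ℚ[X])).add (h₂.mul_left (β : ℚ[X])) using 1
  simp
  linear_combination (-p) * h'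

end FourDivisibility

open FourDivisibility

theorem stmt13_general (K : ℕ) (p : Polynomial ℚ)
    (h4 : ∀ l ≤ K - 1, ∃ z : Polynomial ℤ,
      mkS l p = mkS l (4 * z.map (Int.castRingHom ℚ)))
    (hw : ∀ l ≤ K - 1,
      ((2 + (K : ℚ) - (l : ℚ) - (2 : ℚ) ^ (-(l : ℤ)) : ℚ) : WithTop ℚ) ≤
        wl K l (mkB K p)) :
    ∃ z : Polynomial ℤ, mkB K p = mkB K (4 * z.map (Int.castRingHom ℚ)) := by
  choose! z hz using fun l (_ : l < K) => (h4 l (by omega)).imp fun _ => mkS_eq_iff.1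
  choose! u hu y hy using fun l (hl : l < K) =>
    exists_odd_mul_dvd_sub_cofactor_mul hl (hz l hl) (hw l (by omega))
  have hU : IsCoprime (∏ l ∈ Finset.range K, u l) ((2 ^ K) ^ K) :=
    (IsCoprime.prod_left fun l hl =>
      Int.isCoprime_two_right.2 (hu l (Finset.mem_range.1 hl))).pow_right.pow_right
  obtain ⟨z₂, h₂⟩ := exists_dvd_prod_mul_sub_four_mul (c := fun _ => 2 ^ K) hz
    fun l hl => by exact_mod_cast cyclotomic_dvd_two_pow_mul_sub_cofactor hl (z l)
  rw [Finset.prod_const, Finset.card_range] at h₂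
  obtain ⟨z', hz'⟩ := exists_dvd_sub_four_mul_of_isCoprime hU
    (exists_dvd_prod_mul_sub_four_mul hz hy) ⟨z₂, h₂⟩
  exact ⟨z', mkB_eq_iff.2 hz'⟩

/-- Sufficient divisibility criterion: if pr_l(g) ∈ 4·ℤ[χ]/⟨1+χ^{2^l}⟩ for all l and
w_l(g) ≥ 2+K-l-2^{-l} for all 0 ≤ l ≤ K-1, then g ∈ 4·ℤ[χ]/⟨1+χ+⋯+χ^{2^K-1}⟩. -/
theorem stmt13 (K : ℕ) (hK : 1 ≤ K) (p : Polynomial ℚ)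
    (h4 : ∀ l ≤ K - 1, ∃ z : Polynomial ℤ,
      mkS l p = mkS l (4 * z.map (Int.castRingHom ℚ)))
    (hw : ∀ l ≤ K - 1,
      ((2 + (K : ℚ) - (l : ℚ) - (2 : ℚ) ^ (-(l : ℤ)) : ℚ) : WithTop ℚ) ≤
        wl K l (mkB K p)) :
    ∃ z : Polynomial ℤ, mkB K p = mkB K (4 * z.map (Int.castRingHom ℚ)) :=
  stmt13_general K p h4 hw
end
end

section
/- Define polynomials p_k ∈ ℤ[x] by p₁(x) = x+1 and p_{k+1}(x) = p_k((x+1)²/(4x)) · (4x)^{2^{k-1}}. Then p_k is a polynomial of degree 2^{k-1}, and in the field of rational functions ℚ(χ), substituting f² with f = (1+χ)/(1-χ) gives p_k(f²) = 2^{2^k-1} · (1+χ^{2^k})/(1-χ)^{2^k} for all k ≥ 1. -/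
/-!
For `deg q ≤ n`, the rational function `q((x+1)²/(4x)) · (4x)ⁿ` is the polynomial
`∑ᵢ qᵢ (x+1)²ⁱ (4x)ⁿ⁻ⁱ`, whose degree is `2n` when `deg q = n`: only the top term
reaches it. So the recursion makes each `p_{k+1}` this explicit polynomial, and the
degrees double.

For the values, put `f(t) = (1+t)/(1-t)`. Then `(f(t)² + 1)² / (4 f(t)²) = f(t²)²`, so the
recursion evaluated at `f(t)²` is the formula for `p_k` at `t²`, and an induction over all `t`
that are not roots of unity (such as `χ`) closes.
-/

open Polynomial

namespace Polynomial

variable {R : Type*} [CommRing R]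

/-- `q (a / b) * b ^ n` as a polynomial when `natDegree q ≤ n`
(higher coefficients are dropped). -/
noncomputable def homogenizedComp (q a b : R[X]) (n : ℕ) : R[X] :=
  ∑ i ∈ Finset.range (n + 1), C (q.coeff i) * a ^ i * b ^ (n - i)

lemma aeval_homogenizedComp {K : Type*} [Field K] [Algebra R K] {q : R[X]} {n : ℕ}
    (hq : q.natDegree ≤ n) (a b : R[X]) {t : K} (hb : aeval t b ≠ 0) :
    aeval t (homogenizedComp q a b n) = aeval (aeval t a / aeval t b) q * aeval t b ^ n := by
  rw [aeval_eq_sum_range' (Nat.lt_succ_of_le hq), Finset.sum_mul, homogenizedComp, map_sum]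
  refine Finset.sum_congr rfl fun i hi => ?_
  have hin : i ≤ n := Nat.lt_succ_iff.mp (Finset.mem_range.mp hi)
  rw [map_mul, map_mul, aeval_C, map_pow, map_pow, Algebra.smul_def, div_pow,
    ← Nat.add_sub_of_le hin, pow_add, Nat.add_sub_cancel_left]
  field_simp

lemma natDegree_C_mul_pow_mul_pow_le (c : R) (a b : R[X]) (i j : ℕ) :
    (C c * a ^ i * b ^ j).natDegree ≤ i * a.natDegree + j * b.natDegree := by
  refine natDegree_mul_le.trans (add_le_add (natDegree_mul_le.trans ?_) natDegree_pow_le)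
  rw [natDegree_C, zero_add]
  exact natDegree_pow_le

lemma degree_homogenizedComp {q a b : R[X]} {n : ℕ} (hq : q.degree = n) (ha : a.Monic)
    (hab : b.natDegree < a.natDegree) :
    (homogenizedComp q a b n).degree = (n * a.natDegree : ℕ) := by
  have hlead : q.coeff n ≠ 0 := coeff_ne_zero_of_eq_degree hq
  have : Nontrivial R := nontrivial_of_ne _ _ hlead
  have htop : (C (q.coeff n) * a ^ n).degree = (n * a.natDegree : ℕ) := by
    rw [degree_C_mul_of_mul_ne_zero (by rwa [(ha.pow n).leadingCoeff, mul_one]),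
      degree_eq_natDegree (ha.pow n).ne_zero, ha.natDegree_pow]
  have hlow : (∑ i ∈ Finset.range n, C (q.coeff i) * a ^ i * b ^ (n - i)).degree <
      (n * a.natDegree : ℕ) := by
    refine (degree_sum_le _ _).trans_lt
      ((Finset.sup_lt_iff (WithBot.bot_lt_coe _)).2 fun i hi => ?_)
    have hin := Finset.mem_range.mp hi
    refine degree_le_natDegree.trans_lt (WithBot.coe_lt_coe.2
      ((natDegree_C_mul_pow_mul_pow_le _ _ _ _ _).trans_lt ?_))
    calc i * a.natDegree + (n - i) * b.natDegree
        < i * a.natDegree + (n - i) * a.natDegree := by gcongr; omega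
      _ = n * a.natDegree := by rw [← add_mul, Nat.add_sub_cancel' hin.le]
  rw [homogenizedComp, Finset.sum_range_succ, Nat.sub_self, pow_zero, mul_one,
    degree_add_eq_right_of_degree_lt (htop ▸ hlow), htop]

end Polynomial

namespace RatFunc

variable {K : Type*} [Field K] {R : Type*} [CommRing R] [Algebra R K]

lemma aeval_X_eq_algebraMap_map (p : R[X]) :
    aeval (X : RatFunc K) p = algebraMap K[X] (RatFunc K) (p.map (algebraMap R K)) := by
  rw [← algebraMap_X, aeval_algebraMap_apply, ← aeval_map_algebraMap K, aeval_X_left_apply]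

lemma aeval_X_injective (h : Function.Injective (algebraMap R K)) :
    Function.Injective (aeval (X : RatFunc K) : R[X] → RatFunc K) := by
  intro p q hpq
  simp only [aeval_X_eq_algebraMap_map] at hpq
  exact Polynomial.map_injective _ h (algebraMap_injective K hpq)

lemma eq_homogenizedComp_of_aeval_X [CharZero K] (h : Function.Injective (algebraMap R K))
    {p q : R[X]} {n : ℕ} (hq : q.natDegree ≤ n)
    (hpq : aeval (X : RatFunc K) p = aeval ((X + 1) ^ 2 / (4 * X) : RatFunc K) q * (4 * X) ^ n) :
    p = homogenizedComp q ((Polynomial.X + 1) ^ 2) (4 * Polynomial.X) n := by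
  refine aeval_X_injective h ?_
  rw [hpq, aeval_homogenizedComp hq _ _ (by simp [X_ne_zero, map_ofNat])]
  simp [map_ofNat]

lemma not_isOfFinOrder_X : ¬IsOfFinOrder (X : RatFunc K) := by
  rw [isOfFinOrder_iff_pow_eq_one]
  rintro ⟨n, hn, h⟩
  rw [← algebraMap_X, ← map_pow, ← map_one (algebraMap K[X] (RatFunc K))] at h
  have := congrArg natDegree (algebraMap_injective K h)
  simp only [natDegree_X_pow, natDegree_one] at this
  omega

end RatFunc

lemma ne_neg_one_of_not_isOfFinOrder {R : Type*} [Ring R] {t : R} (ht : ¬IsOfFinOrder t) :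
    t ≠ -1 := by
  rintro rfl
  exact ht (isOfFinOrder_iff_pow_eq_one.2 ⟨2, two_pos, by norm_num⟩)

section Cayley

variable {K : Type*} [Field K] {R : Type*} [CommRing R] [Algebra R K]

/-- The `f = (1 + χ) / (1 - χ)` of the statement, at an arbitrary point. -/
def cayley (t : K) : K := (1 + t) / (1 - t)

lemma cayley_sq_add_one_sq_div [NeZero (2 : K)] {t : K} (ht1 : t ≠ 1) (ht2 : t ≠ -1) :
    (cayley t ^ 2 + 1) ^ 2 / (4 * cayley t ^ 2) = cayley (t ^ 2) ^ 2 := by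
  have h1 : 1 - t ≠ 0 := sub_ne_zero.2 (Ne.symm ht1)
  have h2 : 1 + t ≠ 0 := by rwa [add_comm, ← sub_neg_eq_add, sub_ne_zero]
  have h3 : 1 - t ^ 2 ≠ 0 := by
    rw [show 1 - t ^ 2 = (1 - t) * (1 + t) by ring]; exact mul_ne_zero h1 h2
  have h4 : (4 : K) ≠ 0 := by
    rw [show (4 : K) = 2 * 2 by norm_num]; exact mul_ne_zero two_ne_zero two_ne_zero
  unfold cayley
  field_simp
  ring

lemma aeval_cayley_sq_X_add_one {t : K} (ht1 : t ≠ 1) :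
    aeval (cayley t ^ 2) (X + 1 : R[X]) = 2 ^ (2 ^ 1 - 1) * (1 + t ^ 2 ^ 1) / (1 - t) ^ 2 ^ 1 := by
  have h1 : 1 - t ≠ 0 := sub_ne_zero.2 (Ne.symm ht1)
  simp only [map_add, aeval_X, map_one, cayley]
  field_simp
  ring

lemma aeval_cayley_sq_homogenizedComp [NeZero (2 : K)] {q : R[X]} {j : ℕ}
    (hq : q.natDegree ≤ 2 ^ j) {t : K} (ht1 : t ≠ 1) (ht2 : t ≠ -1)
    (hval : aeval (cayley (t ^ 2) ^ 2) q =
      2 ^ (2 ^ (j + 1) - 1) * (1 + (t ^ 2) ^ 2 ^ (j + 1)) / (1 - t ^ 2) ^ 2 ^ (j + 1)) :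
    aeval (cayley t ^ 2) (homogenizedComp q ((X + 1) ^ 2) (4 * X) (2 ^ j)) =
      2 ^ (2 ^ (j + 2) - 1) * (1 + t ^ 2 ^ (j + 2)) / (1 - t) ^ 2 ^ (j + 2) := by
  have h1 : 1 - t ≠ 0 := sub_ne_zero.2 (Ne.symm ht1)
  have h2 : 1 + t ≠ 0 := by rwa [add_comm, ← sub_neg_eq_add, sub_ne_zero]
  have h4 : (4 : K) ≠ 0 := by
    rw [show (4 : K) = 2 * 2 by norm_num]; exact mul_ne_zero two_ne_zero two_ne_zero
  have hf : cayley t ≠ 0 := div_ne_zero h2 h1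
  rw [aeval_homogenizedComp hq _ _ (by simp [hf, h4, map_ofNat])]
  simp only [map_pow, map_add, map_mul, aeval_X, map_one, map_ofNat]
  rw [cayley_sq_add_one_sq_div ht1 ht2, hval]
  -- with `2 ^ j = r + 1` all exponents are linear in `r`, which `ring` can handle
  obtain ⟨r, hr⟩ : ∃ r, 2 ^ j = r + 1 :=
    ⟨2 ^ j - 1, by have := Nat.one_le_two_pow (n := j); omega⟩
  have e1 : 2 ^ (j + 1) = 2 * r + 2 := by rw [pow_succ, hr]; ring
  have e2 : 2 ^ (j + 2) = 4 * r + 4 := by rw [pow_succ, e1]; ring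
  rw [e1, e2, show 2 * r + 2 - 1 = 2 * r + 1 by omega, show 4 * r + 4 - 1 = 4 * r + 3 by omega, hr,
    show 1 - t ^ 2 = (1 - t) * (1 + t) by ring, show (4 : K) = 2 ^ 2 by norm_num]
  simp only [cayley, div_pow, mul_pow, ← pow_mul]
  field_simp
  ring

end Cayley

/-- The polynomials p_k with p₁(x) = x+1 and p_{k+1}(x) = p_k((x+1)²/(4x))·(4x)^{2^{k-1}}
(the recursion read in the field of rational functions ℚ(χ)) have degree 2^{k-1} and
satisfy p_k(f²) = 2^{2^k-1}·(1+χ^{2^k})/(1-χ)^{2^k} where f = (1+χ)/(1-χ). -/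
theorem stmt15 (p : ℕ → Polynomial ℤ) (h1 : p 1 = X + 1)
    (hrec : ∀ k : ℕ, 1 ≤ k →
      (Polynomial.aeval (RatFunc.X : RatFunc ℚ)) (p (k + 1)) =
        (Polynomial.aeval (((RatFunc.X + 1) ^ 2 / (4 * RatFunc.X)) : RatFunc ℚ)) (p k) *
          (4 * RatFunc.X : RatFunc ℚ) ^ (2 ^ (k - 1))) :
    ∀ k : ℕ, 1 ≤ k →
      (p k).degree = ((2 ^ (k - 1) : ℕ) : WithBot ℕ) ∧
      (Polynomial.aeval ((((1 + RatFunc.X) / (1 - RatFunc.X)) ^ 2 : RatFunc ℚ))) (p k) =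
        2 ^ (2 ^ k - 1) * (1 + RatFunc.X ^ (2 ^ k)) / (1 - RatFunc.X) ^ (2 ^ k) := by
  have hstep (j : ℕ) (hj : (p (j + 1)).natDegree ≤ 2 ^ j) :
      p (j + 2) = homogenizedComp (p (j + 1)) ((X + 1) ^ 2) (4 * X) (2 ^ j) :=
    RatFunc.eq_homogenizedComp_of_aeval_X (algebraMap ℤ ℚ).injective_int hj
      (hrec (j + 1) (Nat.le_add_left 1 j))
  have hdeg (j : ℕ) : (p (j + 1)).degree = (2 ^ j : ℕ) := by
    induction j with
    | zero => simpa [h1] using degree_X_add_C (1 : ℤ)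
    | succ j ih =>
      have hX : ((X + 1) ^ 2 : ℤ[X]).natDegree = 2 := by compute_degree!
      have h4X : (4 * X : ℤ[X]).natDegree ≤ 1 := by compute_degree
      rw [hstep j (natDegree_le_of_degree_le ih.le), degree_homogenizedComp ih
        (by simpa using (monic_X_add_C (1 : ℤ)).pow 2)
        (by rw [hX]; exact h4X.trans_lt one_lt_two), hX, pow_succ]
  have hval (j : ℕ) (t : RatFunc ℚ) (ht : ¬IsOfFinOrder t) :
      aeval (cayley t ^ 2) (p (j + 1)) =
        2 ^ (2 ^ (j + 1) - 1) * (1 + t ^ 2 ^ (j + 1)) / (1 - t) ^ 2 ^ (j + 1) := by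
    have ht1 : t ≠ 1 := fun h => ht (h ▸ IsOfFinOrder.one)
    induction j generalizing t with
    | zero => rw [h1]; exact aeval_cayley_sq_X_add_one ht1
    | succ j ih =>
      have ht2 : ¬IsOfFinOrder (t ^ 2) := fun h => ht (h.of_pow two_ne_zero)
      rw [hstep j (natDegree_le_of_degree_le (hdeg j).le)]
      exact aeval_cayley_sq_homogenizedComp (natDegree_le_of_degree_le (hdeg j).le) ht1
        (ne_neg_one_of_not_isOfFinOrder ht) (ih (t ^ 2) ht2 fun h => ht2 (h ▸ IsOfFinOrder.one))
  intro k hk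
  obtain ⟨j, rfl⟩ := Nat.exists_eq_add_of_le' hk
  exact ⟨hdeg j, hval j _ RatFunc.not_isOfFinOrder_X⟩
end

section
/- Let N = 2^K and let g be an element of 2·R⁻, where R⁻ = {Σ a_r (χ^r - χ^{-r}) : a_r ∈ ℤ} ⊂ ℤ[χ]/⟨1+χ+⋯+χ^{N-1}⟩. If g ∉ 4·R⁻, then there exists an odd natural number c such that g·(1-χ)^c ∈ 4·ℤ[χ]/⟨1+χ+⋯+χ^{N-1}⟩ but g·(1-χ)^{c-1} ∉ 4·ℤ[χ]/⟨1+χ+⋯+χ^{N-1}⟩. -/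
/-!
Write `N = 2 ^ K` and `Φ = 1 + X + ⋯ + X ^ (N - 1)`. Since `Φ` is monic, `ℤ[χ]` is a free
`ℤ`-module, so `4 ∣ 2 * Q(χ)` iff `2 ∣ Q(χ)`; and since `Φ ≡ (X - 1) ^ (N - 1)` modulo `2`,
this happens iff `(X - 1) ^ (N - 1)` divides `Q mod 2` in `𝔽₂[X]`.

An element of `R⁻` is the image of `P = ∑ a r • (X ^ r - X ^ (N - r))`, `1 ≤ r < N / 2`. If all
`a r` are even, then `g = 2 * y ∈ 4 • R⁻`. Otherwise `p = P mod 2` is a nonzero polynomial of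
degree `< N` with `reflect N p = -p = p`. Over a field of characteristic `2` such a palindrome
has a root of even multiplicity `m` at `1`: a palindrome of odd length vanishes at `1`, so the
factors `X - 1` come off in pairs. Then `(X - 1) ^ (N - 1) ∣ p * (X - 1) ^ j` iff
`N - 1 ≤ m + j`, and `c = N - 1 - m` is odd.
-/

noncomputable section
open Polynomial

/-- The quotient ring ℤ[χ]/⟨1+χ+⋯+χ^{2^K-1}⟩. -/
abbrev QZ (K : ℕ) :=
  Polynomial ℤ ⧸ Ideal.span {(∑ i ∈ Finset.range (2 ^ K), X ^ i : Polynomial ℤ)}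

def mkZ (K : ℕ) : Polynomial ℤ →+* QZ K := Ideal.Quotient.mk _

/-- The (-1)-eigenspace R⁻, spanned over ℤ by χ^r - χ^{N-r} for 1 ≤ r ≤ N/2. -/
def Rneg (K : ℕ) : Submodule ℤ (QZ K) :=
  Submodule.span ℤ
    {x : QZ K | ∃ r : ℕ, 1 ≤ r ∧ r ≤ 2 ^ K / 2 ∧ x = mkZ K (X ^ r - X ^ (2 ^ K - r))}

namespace Polynomial

section CharTwo

variable {R : Type*} [CommRing R] [CharP R 2]

lemma reflect_X_sub_C_one_mul {n : ℕ} {q : R[X]} (hq : q.natDegree ≤ n) :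
    reflect (n + 1) ((X - C 1) * q) = (X - C 1) * reflect n q := by
  rw [add_comm, reflect_mul _ _ (natDegree_X_sub_C_le 1) hq, reflect_sub, reflect_C, ← pow_one X,
    reflect_monomial]
  simp [CharTwo.sub_eq_add, add_comm]

lemma isRoot_one_of_reflect_eq_self {n : ℕ} (hn : Odd n) {q : R[X]}
    (hdeg : q.natDegree ≤ n) (hq : reflect n q = q) : q.IsRoot 1 := by
  obtain ⟨k, rfl⟩ := hn
  rw [IsRoot, eval_eq_sum_range' (Nat.lt_succ_of_le hdeg)]
  refine Finset.sum_involution (fun i _ => 2 * k + 1 - i) (fun i hi => ?_)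
    (fun i hi _ => by simp at hi; omega) (fun i hi => by simp at hi ⊢)
    (fun i hi => by simp at hi; omega)
  have hsym : q.coeff (2 * k + 1 - i) = q.coeff i := by
    simp only [Finset.mem_range] at hi
    conv_lhs => rw [← hq]
    rw [coeff_reflect, revAt_le (by omega), Nat.sub_sub_self (by omega)]
  simp [hsym, CharTwo.add_self_eq_zero]

theorem even_rootMultiplicity_one_of_reflect_eq_self [IsDomain R] (n : ℕ) {p : R[X]}
    (hdeg : p.natDegree ≤ 2 * n) (hp : reflect (2 * n) p = p) :
    Even (p.rootMultiplicity 1) := by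
  induction n generalizing p with
  | zero =>
    rw [eq_C_of_natDegree_le_zero hdeg, rootMultiplicity_C]
    exact Even.zero
  | succ n ih =>
    by_cases h1 : p.IsRoot 1
    swap
    · rw [rootMultiplicity_eq_zero h1]
      exact Even.zero
    obtain ⟨q, rfl⟩ := dvd_iff_isRoot.mpr h1
    rcases eq_or_ne q 0 with rfl | hq0
    · simp
    have hq : q.natDegree ≤ 2 * n + 1 := by
      rw [natDegree_mul (X_sub_C_ne_zero 1) hq0, natDegree_X_sub_C] at hdeg
      omega
    rw [show 2 * (n + 1) = 2 * n + 1 + 1 by ring, reflect_X_sub_C_one_mul hq,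
      mul_right_inj' (X_sub_C_ne_zero 1)] at hp
    obtain ⟨r, rfl⟩ := dvd_iff_isRoot.mpr (isRoot_one_of_reflect_eq_self (by simp) hq hp)
    have hr0 : r ≠ 0 := by
      rintro rfl
      simp at hq0
    have hr : r.natDegree ≤ 2 * n := by
      rw [natDegree_mul (X_sub_C_ne_zero 1) hr0, natDegree_X_sub_C] at hq
      omega
    rw [reflect_X_sub_C_one_mul hr, mul_right_inj' (X_sub_C_ne_zero 1)] at hp
    rw [← mul_assoc, ← pow_two, mul_comm, rootMultiplicity_mul_X_sub_C_pow hr0]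
    exact (ih hr hp).add even_two

end CharTwo

section IsDomain

variable {R : Type*} [CommRing R] [IsDomain R]

lemma rootMultiplicity_le_natDegree (p : R[X]) (a : R) : p.rootMultiplicity a ≤ p.natDegree := by
  classical
  exact (count_roots p).symm.le.trans ((Multiset.count_le_card _ _).trans (card_roots' p))

lemma pow_X_sub_C_dvd_mul_pow_iff {p : R[X]} (hp : p ≠ 0) (a : R) (n k : ℕ) :
    (X - C a) ^ n ∣ p * (X - C a) ^ k ↔ n ≤ p.rootMultiplicity a + k := by
  rw [← rootMultiplicity_mul_X_sub_C_pow hp, le_rootMultiplicity_iff]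
  exact mul_ne_zero hp (pow_ne_zero _ (X_sub_C_ne_zero a))

lemma geom_sum_X_eq_X_sub_C_one_pow (p : ℕ) [Fact p.Prime] [CharP R p] (K : ℕ) :
    ∑ i ∈ Finset.range (p ^ K), (X : R[X]) ^ i = (X - C 1) ^ (p ^ K - 1) := by
  apply mul_right_cancel₀ (X_sub_C_ne_zero (1 : R))
  rw [pow_sub_one_mul (pow_ne_zero _ (Fact.out : p.Prime).ne_zero), sub_pow_char_pow, C_1,
    one_pow, geom_sum_mul]

end IsDomain

lemma map_dvd_map_intCastRingHom_iff (n : ℕ) (f Q : ℤ[X]) :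
    f.map (Int.castRingHom (ZMod n)) ∣ Q.map (Int.castRingHom (ZMod n)) ↔
      ∃ A : ℤ[X], f ∣ Q - n * A := by
  have hker : ∀ F : ℤ[X], F.map (Int.castRingHom (ZMod n)) = 0 ↔ (n : ℤ[X]) ∣ F := fun F => by
    rw [← C_eq_natCast, C_dvd_iff_dvd_coeff, Polynomial.ext_iff]
    simp [ZMod.intCast_zmod_eq_zero_iff_dvd]
  constructor
  · rintro ⟨W, hW⟩
    obtain ⟨B, rfl⟩ := map_surjective _ (ZMod.ringHom_surjective (Int.castRingHom (ZMod n))) W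
    obtain ⟨A, hA⟩ := (hker (Q - f * B)).1 (by simp [Polynomial.map_sub, hW])
    exact ⟨A, B, by rw [← hA]; ring⟩
  · rintro ⟨A, B, hB⟩
    refine ⟨B.map (Int.castRingHom (ZMod n)), ?_⟩
    rw [← Polynomial.map_mul, ← hB, Polynomial.map_sub, (hker (n * A)).2 (dvd_mul_right _ _),
      sub_zero]

end Polynomial

lemma two_dvd_of_four_dvd_two_mul {A : Type*} [CommRing A] [Module.IsTorsionFree ℤ A] {a : A}
    (h : (4 : A) ∣ 2 * a) : (2 : A) ∣ a := by
  obtain ⟨b, hb⟩ := h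
  refine ⟨b, smul_right_injective A (two_ne_zero : (2 : ℤ) ≠ 0) ?_⟩
  dsimp only
  rw [zsmul_eq_mul, zsmul_eq_mul, Int.cast_ofNat, hb]
  ring

instance (K : ℕ) : Module.Free ℤ (QZ K) :=
  (monic_geom_sum_X (pow_ne_zero K two_ne_zero)).free_quotient

lemma two_dvd_mkZ_iff (K : ℕ) (Q : ℤ[X]) :
    (2 : QZ K) ∣ mkZ K Q ↔ (X - C 1) ^ (2 ^ K - 1) ∣ Q.map (Int.castRingHom (ZMod 2)) := by
  rw [← geom_sum_X_eq_X_sub_C_one_pow 2 K, show (∑ i ∈ Finset.range (2 ^ K), (X : (ZMod 2)[X]) ^ i)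
    = (∑ i ∈ Finset.range (2 ^ K), (X : ℤ[X]) ^ i).map (Int.castRingHom (ZMod 2)) by
      simp [Polynomial.map_sum], map_dvd_map_intCastRingHom_iff]
  constructor
  · rintro ⟨t, ht⟩
    obtain ⟨A, rfl⟩ := Ideal.Quotient.mk_surjective t
    refine ⟨A, Ideal.mem_span_singleton.1 ((Ideal.Quotient.mk_eq_mk_iff_sub_mem _ _).1 ?_)⟩
    rw [map_mul, map_natCast, Nat.cast_ofNat]
    exact ht
  · rintro ⟨A, hA⟩
    refine ⟨mkZ K A, ?_⟩
    have h := (Ideal.Quotient.mk_eq_mk_iff_sub_mem _ _).2 (Ideal.mem_span_singleton.2 hA)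
    rwa [map_mul, map_natCast, Nat.cast_ofNat] at h

lemma four_dvd_two_mul_mkZ_iff (K : ℕ) (Q : ℤ[X]) :
    (4 : QZ K) ∣ 2 * mkZ K Q ↔ (X - C 1) ^ (2 ^ K - 1) ∣ Q.map (Int.castRingHom (ZMod 2)) := by
  rw [← two_dvd_mkZ_iff]
  refine ⟨two_dvd_of_four_dvd_two_mul, fun h => ?_⟩
  rw [show (4 : QZ K) = 2 * 2 by norm_num]
  exact mul_dvd_mul_left 2 h

lemma four_dvd_two_mul_mkZ_mul_pow_iff {K : ℕ} {Q : ℤ[X]}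
    (hQ : Q.map (Int.castRingHom (ZMod 2)) ≠ 0) (j : ℕ) :
    (4 : QZ K) ∣ 2 * mkZ K Q * mkZ K (1 - X) ^ j ↔
      2 ^ K - 1 ≤ (Q.map (Int.castRingHom (ZMod 2))).rootMultiplicity 1 + j := by
  have h1X : (1 - X : (ZMod 2)[X]) = X - C 1 := by
    rw [C_1, CharTwo.sub_eq_add, CharTwo.sub_eq_add, add_comm]
  rw [mul_assoc, ← map_pow, ← map_mul, four_dvd_two_mul_mkZ_iff, Polynomial.map_mul,
    Polynomial.map_pow, Polynomial.map_sub, Polynomial.map_one, map_X, h1X,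
    pow_X_sub_C_dvd_mul_pow_iff hQ]

open Finset

-- The generator with `r = N / 2` vanishes for even `N`, hence the range `Ico`.
def rnegPoly (N : ℕ) : (ℕ → ℤ) →ₗ[ℤ] ℤ[X] where
  toFun a := ∑ r ∈ Ico 1 (N / 2), a r • (X ^ r - X ^ (N - r))
  map_add' a b := by simp [add_smul, sum_add_distrib]
  map_smul' c a := by simp [smul_sum, mul_smul]

lemma rnegPoly_apply (N : ℕ) (a : ℕ → ℤ) :
    rnegPoly N a = ∑ r ∈ Ico 1 (N / 2), a r • (X ^ r - X ^ (N - r)) := rfl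

lemma coeff_rnegPoly {N r : ℕ} (hr : r ∈ Ico 1 (N / 2)) (a : ℕ → ℤ) :
    (rnegPoly N a).coeff r = a r := by
  rw [mem_Ico] at hr
  rw [rnegPoly_apply, finsetSum_coeff, sum_eq_single_of_mem r (mem_Ico.2 hr)]
  · simp [coeff_X_pow, show r ≠ N - r by omega]
  · intro s hs hsr
    rw [mem_Ico] at hs
    simp [coeff_X_pow, Ne.symm hsr, show r ≠ N - s by omega]

lemma natDegree_rnegPoly_le (N : ℕ) (a : ℕ → ℤ) : (rnegPoly N a).natDegree ≤ N - 1 := by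
  rw [rnegPoly_apply]
  refine natDegree_sum_le_of_forall_le _ _ fun r hr => ?_
  rw [mem_Ico] at hr
  refine (natDegree_smul_le _ _).trans ((natDegree_sub_le _ _).trans ?_)
  simp only [natDegree_X_pow]
  omega

lemma reflect_rnegPoly (N : ℕ) (a : ℕ → ℤ) : reflect N (rnegPoly N a) = -rnegPoly N a := by
  rw [rnegPoly_apply, ← sum_neg_distrib]
  refine (map_sum (AddMonoidHom.mk' (reflect N) fun f g => reflect_add f g N : ℤ[X] →+ ℤ[X])
    (fun r => a r • (X ^ r - X ^ (N - r))) (Ico 1 (N / 2))).trans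
    (sum_congr rfl fun r hr => ?_)
  rw [mem_Ico] at hr
  simp only [AddMonoidHom.mk'_apply, zsmul_eq_mul, ← C_eq_intCast, reflect_C_mul, reflect_sub,
    reflect_monomial, revAt_le (show r ≤ N by omega), revAt_le (show N - r ≤ N by omega),
    Nat.sub_sub_self (show r ≤ N by omega)]
  ring

lemma even_rootMultiplicity_one_map_rnegPoly {N : ℕ} (hN : Even N) (a : ℕ → ℤ) :
    Even (((rnegPoly N a).map (Int.castRingHom (ZMod 2))).rootMultiplicity 1) := by
  obtain ⟨n, rfl⟩ := hN
  rw [← two_mul]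
  refine even_rootMultiplicity_one_of_reflect_eq_self n
    (natDegree_map_le.trans ((natDegree_rnegPoly_le _ _).trans (by omega))) ?_
  rw [reflect_map, reflect_rnegPoly, Polynomial.map_neg, CharTwo.neg_eq]

lemma exists_rnegPoly_eq_two_mul_of_map_eq_zero {N : ℕ} {a : ℕ → ℤ}
    (h : (rnegPoly N a).map (Int.castRingHom (ZMod 2)) = 0) :
    ∃ b, rnegPoly N a = 2 * rnegPoly N b := by
  have h2 : ∀ r ∈ Ico 1 (N / 2), 2 ∣ a r := fun r hr => by
    simpa [coeff_rnegPoly hr, ZMod.intCast_zmod_eq_zero_iff_dvd] using congrArg (coeff · r) h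
  refine ⟨fun r => a r / 2, ?_⟩
  rw [rnegPoly_apply, rnegPoly_apply, mul_sum]
  refine sum_congr rfl fun r hr => ?_
  obtain ⟨c, hc⟩ := h2 r hr
  rw [hc, Int.mul_ediv_cancel_left _ two_ne_zero, mul_smul, two_zsmul, two_mul]

lemma mem_Rneg_iff {K : ℕ} {y : QZ K} : y ∈ Rneg K ↔ ∃ a, y = mkZ K (rnegPoly (2 ^ K) a) := by
  let f := (mkZ K).toIntAlgHom.toLinearMap ∘ₗ rnegPoly (2 ^ K)
  suffices Rneg K = LinearMap.range f by
    rw [this, LinearMap.mem_range]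
    simp [f, eq_comm]
  apply le_antisymm
  · rw [Rneg, Submodule.span_le]
    rintro _ ⟨r, hr1, hr2, rfl⟩
    rcases hr2.lt_or_eq with hr | rfl
    · refine ⟨Pi.single r 1, ?_⟩
      simp [f, rnegPoly_apply, Pi.single_apply, hr1, hr]
    · obtain _ | K := K
      · simp at hr1
      have hN : 2 ^ (K + 1) - 2 ^ (K + 1) / 2 = 2 ^ (K + 1) / 2 := by rw [pow_succ]; omega
      rw [hN, sub_self, map_zero]
      exact zero_mem _
  · rintro _ ⟨a, rfl⟩
    simp only [f, LinearMap.comp_apply, rnegPoly_apply, map_sum, map_zsmul]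
    refine sum_mem fun r hr => Submodule.smul_mem _ _ (Submodule.subset_span ?_)
    rw [mem_Ico] at hr
    exact ⟨r, hr.1, hr.2.le, rfl⟩

/-- If g ∈ 2·R⁻ but g ∉ 4·R⁻, then there is an odd c with g·(1-χ)^c divisible by 4
but g·(1-χ)^{c-1} not divisible by 4 in ℤ[χ]/⟨1+χ+⋯+χ^{2^K-1}⟩. -/
theorem stmt17 (K : ℕ) (hK : 1 ≤ K) (g y : QZ K) (hy : y ∈ Rneg K) (hg : g = 2 * y)
    (h4 : ¬ ∃ z ∈ Rneg K, g = 4 * z) :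
    ∃ c : ℕ, Odd c ∧ (4 : QZ K) ∣ g * (mkZ K (1 - X)) ^ c ∧
      ¬ (4 : QZ K) ∣ g * (mkZ K (1 - X)) ^ (c - 1) := by
  obtain ⟨a, rfl⟩ := mem_Rneg_iff.1 hy
  set p := (rnegPoly (2 ^ K) a).map (Int.castRingHom (ZMod 2))
  have hp : p ≠ 0 := fun hp => h4 <| by
    obtain ⟨b, hb⟩ := exists_rnegPoly_eq_two_mul_of_map_eq_zero hp
    exact ⟨_, mem_Rneg_iff.2 ⟨b, rfl⟩, by rw [hg, hb, map_mul, map_ofNat, ← mul_assoc]; norm_num⟩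
  have hN : Even (2 ^ K) := Nat.even_pow.2 ⟨even_two, by omega⟩
  obtain ⟨m, hm⟩ : Even (p.rootMultiplicity 1) := even_rootMultiplicity_one_map_rnegPoly hN a
  have hle : p.rootMultiplicity 1 ≤ 2 ^ K - 1 :=
    (rootMultiplicity_le_natDegree p 1).trans (natDegree_map_le.trans (natDegree_rnegPoly_le _ _))
  have key : ∀ j, (4 : QZ K) ∣ g * mkZ K (1 - X) ^ j ↔ 2 ^ K - 1 ≤ p.rootMultiplicity 1 + j :=
    fun j => hg ▸ four_dvd_two_mul_mkZ_mul_pow_iff hp j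
  obtain ⟨n, hn⟩ := hN
  have hpos : 1 ≤ 2 ^ K := Nat.one_le_two_pow
  refine ⟨2 ^ K - 1 - p.rootMultiplicity 1, ⟨n - m - 1, by omega⟩, (key _).2 (by omega),
    fun h => ?_⟩
  have := (key _).1 h
  omega
end
end

section
/- Let g₁, g₂ ∈ ℚ[χ]/⟨1+χ+⋯+χ^{2^K-1}⟩ and c ≥ 1 such that for i = 1,2: 2·g_i ∈ 4·ℤ[χ]/I, g_i·(1-χ)^c ∈ 4·ℤ[χ]/I, and g_i·(1-χ)^{c-1} ∉ 4·ℤ[χ]/I, where I = ⟨1+χ+⋯+χ^{2^K-1}⟩. Then (g₁+g₂)·(1-χ)^{c-1} ∈ 4·ℤ[χ]/I. -/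
noncomputable section
open Polynomial

/-- Membership in 4·ℤ[χ]/I, the image of 4·ℤ[χ] in the quotient. -/
def InZ4 (K : ℕ) (x : QB K) : Prop :=
  ∃ z : Polynomial ℤ, x = mkB K (4 * z.map (Int.castRingHom ℚ))

namespace Stmt18Aux

def Φ (K : ℕ) : Polynomial ℤ := ∑ i ∈ Finset.range (2 ^ K), X ^ i

lemma Φ_monic (K : ℕ) : (Φ K).Monic :=
  Polynomial.monic_geom_sum_X (by positivity)

def r : Polynomial ℤ →+* Polynomial (ZMod 2) :=
  Polynomial.mapRingHom (Int.castRingHom (ZMod 2))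

lemma r_eq_zero_iff (q : Polynomial ℤ) : r q = 0 ↔ ∃ q', q = 2 * q' := by
  constructor
  · intro h
    have hco : ∀ n : ℕ, (2 : ℤ) ∣ q.coeff n := by
      intro n
      have : (q.coeff n : ZMod 2) = 0 := by
        have := congrArg (fun p => Polynomial.coeff p n) h
        simpa [r, Polynomial.coeff_map] using this
      exact (ZMod.intCast_zmod_eq_zero_iff_dvd _ 2).mp this
    obtain ⟨q', hq'⟩ := (Polynomial.C_dvd_iff_dvd_coeff _ _).mpr hco
    exact ⟨q', by simpa using hq'⟩
  · rintro ⟨q', rfl⟩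
    rw [map_mul]
    have : r 2 = 0 := by
      rw [show ((2:ℤ[X])) = C 2 by simp, show r (C 2) = C ((2:ℤ) : ZMod 2) from Polynomial.map_C _,
        show ((2:ℤ) : ZMod 2) = 0 by decide, map_zero]
    rw [this, zero_mul]

lemma X_add_one_ne_zero : (X + 1 : (ZMod 2)[X]) ≠ 0 := by
  have h := Polynomial.monic_X_add_C (1 : ZMod 2)
  rw [Polynomial.C_1] at h
  exact h.ne_zero

lemma rΦ (K : ℕ) : r (Φ K) = (X + 1) ^ (2 ^ K - 1) := by
  apply mul_right_cancel₀ X_add_one_ne_zero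
  have h1 : r (Φ K) * (X + 1) = X ^ (2^K) - 1 := by
    have hr : r (Φ K) = ∑ i ∈ Finset.range (2 ^ K), (X:(ZMod 2)[X]) ^ i := by
      simp [r, Φ, Polynomial.map_sum]
    rw [hr, show (X + 1 : (ZMod 2)[X]) = X - 1 from (CharTwo.sub_eq_add X 1).symm,
      geom_sum_mul]
  rw [h1]
  have h2 : (X + 1 : (ZMod 2)[X]) ^ (2^K) = X ^ (2^K) + 1 := by
    simpa using add_pow_char_pow (X:(ZMod 2)[X]) 1 2 K
  calc X ^ (2^K) - (1:(ZMod 2)[X]) = X ^ (2^K) + 1 := CharTwo.sub_eq_add _ _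
    _ = (X+1)^(2^K) := h2.symm
    _ = (X+1)^(2^K - 1) * (X+1) := by
        rw [← pow_succ]; congr 1; have : 1 ≤ 2^K := Nat.one_le_two_pow; omega

lemma rΦ_ne_zero (K : ℕ) : r (Φ K) ≠ 0 := by
  rw [rΦ]; exact pow_ne_zero _ X_add_one_ne_zero

lemma X_add_one_dvd_iff (s : (ZMod 2)[X]) : (X + 1) ∣ s ↔ s.eval 1 = 0 := by
  rw [show (X + 1 : (ZMod 2)[X]) = X - C 1 by
    rw [show (C 1 : (ZMod 2)[X]) = 1 from Polynomial.C_1, CharTwo.sub_eq_add]]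
  exact Polynomial.dvd_iff_isRoot

lemma add_unit {s₁ s₂ : (ZMod 2)[X]} (h1 : ¬ (X+1) ∣ s₁) (h2 : ¬ (X+1) ∣ s₂) :
    (X + 1) ∣ s₁ + s₂ := by
  rw [X_add_one_dvd_iff] at *
  have e : ∀ x : ZMod 2, x ≠ 0 → x = 1 := by decide
  rw [Polynomial.eval_add, e _ h1, e _ h2]
  decide

lemma key_dvd {R : Type*} [CommRing R] [IsDomain R] (t : R) (ht : t ≠ 0)
    (m c : ℕ) (hc : 1 ≤ c) (p₁ p₂ : R)
    (h1 : t ^ m ∣ p₁ * t ^ c) (h2 : t ^ m ∣ p₂ * t ^ c)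
    (hn1 : ¬ t ^ m ∣ p₁ * t ^ (c-1)) (hn2 : ¬ t ^ m ∣ p₂ * t ^ (c-1))
    (hu : ∀ s₁ s₂ : R, ¬ t ∣ s₁ → ¬ t ∣ s₂ → t ∣ s₁ + s₂) :
    t ^ m ∣ (p₁ + p₂) * t ^ (c-1) := by
  have hcm : c ≤ m := by
    by_contra h
    exact hn1 (dvd_mul_of_dvd_right (pow_dvd_pow t (by omega)) _)
  have extract : ∀ p : R, t ^ m ∣ p * t ^ c → ¬ t ^ m ∣ p * t ^ (c-1) →
      ∃ s, p = t ^ (m - c) * s ∧ ¬ t ∣ s := by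
    intro p hp hnp
    obtain ⟨a, ha⟩ := hp
    have hps : p = t ^ (m - c) * a := by
      have hpow : (t:R) ^ c ≠ 0 := pow_ne_zero _ ht
      apply mul_right_cancel₀ hpow
      rw [ha, show t ^ m = t ^ (m-c) * t ^ c by rw [← pow_add]; congr 1; omega]
      ring
    refine ⟨a, hps, ?_⟩
    intro ⟨a', ha'⟩
    apply hnp
    refine ⟨a', ?_⟩
    rw [hps, ha']
    rw [show t ^ m = t ^ (m-c) * t * t ^ (c-1) by
      rw [← pow_succ, ← pow_add]; congr 1; omega]
    ring
  obtain ⟨s₁, hs1, hns1⟩ := extract p₁ h1 hn1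
  obtain ⟨s₂, hs2, hns2⟩ := extract p₂ h2 hn2
  obtain ⟨u, hu'⟩ := hu s₁ s₂ hns1 hns2
  refine ⟨u, ?_⟩
  rw [hs1, hs2, ← mul_add, hu',
    show t ^ m = t ^ (m-c) * t * t ^ (c-1) by rw [← pow_succ, ← pow_add]; congr 1; omega]
  ring

lemma mk_Φ (K : ℕ) : mkB K ((Φ K).map (Int.castRingHom ℚ)) = 0 := by
  rw [mkB, Ideal.Quotient.eq_zero_iff_mem]
  apply Ideal.subset_span
  simp [Φ, Polynomial.map_sum]

lemma inZ4_iff (K : ℕ) (z : ℤ[X]) :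
    InZ4 K (mkB K ((2 * z).map (Int.castRingHom ℚ))) ↔ r (Φ K) ∣ r z := by
  constructor
  · rintro ⟨w, hw⟩
    rw [mkB, Ideal.Quotient.mk_eq_mk_iff_sub_mem, Ideal.mem_span_singleton] at hw
    have hgen : (∑ i ∈ Finset.range (2^K), (X:ℚ[X])^i) = (Φ K).map (Int.castRingHom ℚ) := by
      simp [Φ, Polynomial.map_sum]
    rw [hgen, show (4:ℚ[X]) * w.map (Int.castRingHom ℚ) = (4*w).map (Int.castRingHom ℚ) by
      simp, ← Polynomial.map_sub] at hw
    have hdvd : Φ K ∣ 2*z - 4*w :=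
      (Polynomial.map_dvd_map _ Int.cast_injective (Φ_monic K)).mp hw
    obtain ⟨q, hq⟩ := hdvd
    have hz0 : r (Φ K) * r q = 0 := by
      rw [← map_mul, ← hq, map_sub, map_mul, map_mul,
        show r 2 = 0 from (r_eq_zero_iff 2).mpr ⟨1, by ring⟩,
        show r 4 = 0 from (r_eq_zero_iff 4).mpr ⟨2, by ring⟩]
      ring
    have hrq : r q = 0 := by
      rcases mul_eq_zero.mp hz0 with h | h
      · exact absurd h (rΦ_ne_zero K)
      · exact h
    obtain ⟨q', hq'⟩ := (r_eq_zero_iff q).mp hrq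
    have hcancel : z - 2*w = q' * Φ K := by
      have h2 : (2:ℤ[X]) ≠ 0 := two_ne_zero
      apply mul_left_cancel₀ h2
      rw [hq'] at hq
      linear_combination hq
    refine ⟨r q', ?_⟩
    have : z = q' * Φ K + 2 * w := by linear_combination hcancel
    rw [this, map_add, map_mul, map_mul,
      show r 2 = 0 from (r_eq_zero_iff 2).mpr ⟨1, by ring⟩]
    ring
  · rintro ⟨u, hu⟩
    obtain ⟨q, hq⟩ := Polynomial.map_surjective (Int.castRingHom (ZMod 2)) (fun x => ZMod.intCast_surjective x) u
    have h0 : r (z - Φ K * q) = 0 := by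
      rw [map_sub, map_mul, show r q = u from hq, hu]
      ring
    obtain ⟨w, hw⟩ := (r_eq_zero_iff _).mp h0
    refine ⟨w, ?_⟩
    have key : (2*z).map (Int.castRingHom ℚ) =
        (4*w).map (Int.castRingHom ℚ) + ((2*q).map (Int.castRingHom ℚ)) * ((Φ K).map (Int.castRingHom ℚ)) := by
      rw [← Polynomial.map_mul, ← Polynomial.map_add]
      congr 1
      linear_combination (2:ℤ[X]) * hw
    rw [key, map_add, map_mul, mk_Φ, mul_zero, add_zero]
    congr 1
    simp [Polynomial.map_mul]

end Stmt18Aux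

open Stmt18Aux in
/-- If for i = 1,2 we have 2·g_i ∈ 4·ℤ[χ]/I, g_i·(1-χ)^c ∈ 4·ℤ[χ]/I and
g_i·(1-χ)^{c-1} ∉ 4·ℤ[χ]/I, then (g₁+g₂)·(1-χ)^{c-1} ∈ 4·ℤ[χ]/I. -/
theorem stmt18 (K : ℕ) (hK : 1 ≤ K) (c : ℕ) (hc : 1 ≤ c) (g₁ g₂ : QB K)
    (h21 : InZ4 K (2 * g₁)) (h22 : InZ4 K (2 * g₂))
    (hc1 : InZ4 K (g₁ * (mkB K (1 - X)) ^ c)) (hc2 : InZ4 K (g₂ * (mkB K (1 - X)) ^ c))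
    (hn1 : ¬ InZ4 K (g₁ * (mkB K (1 - X)) ^ (c - 1)))
    (hn2 : ¬ InZ4 K (g₂ * (mkB K (1 - X)) ^ (c - 1))) :
    InZ4 K ((g₁ + g₂) * (mkB K (1 - X)) ^ (c - 1)) := by
  -- Step 1: divide by 2: gᵢ = mkB K ((2*zᵢ).map ι)
  have half : ∀ g : QB K, InZ4 K (2*g) →
      ∃ z : ℤ[X], g = mkB K ((2*z).map (Int.castRingHom ℚ)) := by
    rintro g ⟨z, hz⟩
    refine ⟨z, ?_⟩
    have e1 : mkB K (C (2⁻¹ : ℚ)) * (2 : QB K) = 1 := by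
      rw [show (2 : QB K) = mkB K 2 from (map_ofNat (mkB K) 2).symm, ← map_mul,
        show (C (2⁻¹:ℚ)) * 2 = 1 by
          rw [(map_ofNat (C : ℚ →+* ℚ[X]) 2).symm, ← C_mul]; norm_num,
        map_one]
    calc g = (mkB K (C (2⁻¹:ℚ)) * 2) * g := by rw [e1, one_mul]
      _ = mkB K (C (2⁻¹:ℚ)) * (2 * g) := by ring
      _ = mkB K (C (2⁻¹:ℚ)) * mkB K (4 * z.map (Int.castRingHom ℚ)) := by rw [hz]
      _ = mkB K ((2*z).map (Int.castRingHom ℚ)) := by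
          rw [← map_mul]
          congr 1
          rw [Polynomial.map_mul, Polynomial.map_ofNat,
            (map_ofNat (C : ℚ →+* ℚ[X]) 4).symm, ← mul_assoc, ← C_mul,
            show (2⁻¹ : ℚ) * 4 = 2 by norm_num, map_ofNat (C : ℚ →+* ℚ[X]) 2]
  obtain ⟨z₁, hz1⟩ := half g₁ h21
  obtain ⟨z₂, hz2⟩ := half g₂ h22
  -- Step 2: products in terms of integer polynomials
  have prod : ∀ z : ℤ[X], ∀ e : ℕ,
      mkB K ((2*z).map (Int.castRingHom ℚ)) * (mkB K (1-X)) ^ e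
        = mkB K ((2*(z*(1-X)^e)).map (Int.castRingHom ℚ)) := by
    intro z e
    rw [← map_pow, ← map_mul]
    congr 1
    simp only [Polynomial.map_mul, Polynomial.map_pow, Polynomial.map_sub,
      Polynomial.map_one, Polynomial.map_X, Polynomial.map_ofNat]
    ring
  -- Step 3: translate hypotheses mod 2
  have r1X : r ((1:ℤ[X]) - X) = X + 1 := by
    rw [map_sub, map_one, show r X = X from Polynomial.map_X _, CharTwo.sub_eq_add, add_comm]
  have rprod : ∀ z : ℤ[X], ∀ e : ℕ, r (z * (1-X)^e) = r z * (X+1)^e := by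
    intro z e
    rw [map_mul, map_pow, r1X]
  have transl : ∀ (z : ℤ[X]) (g : QB K) (e : ℕ),
      g = mkB K ((2*z).map (Int.castRingHom ℚ)) →
      (InZ4 K (g * (mkB K (1 - X)) ^ e) ↔ (X+1)^(2^K-1) ∣ r z * (X+1)^e) := by
    intro z g e hg
    rw [hg, prod, inZ4_iff, rprod, rΦ]
  rw [transl z₁ g₁ c hz1] at hc1
  rw [transl z₂ g₂ c hz2] at hc2
  rw [transl z₁ g₁ (c-1) hz1] at hn1
  rw [transl z₂ g₂ (c-1) hz2] at hn2
  -- Step 4: the key divisibility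
  have key : (X+1:(ZMod 2)[X])^(2^K-1) ∣ (r z₁ + r z₂) * (X+1)^(c-1) :=
    key_dvd (X+1) X_add_one_ne_zero (2^K-1) c hc (r z₁) (r z₂) hc1 hc2 hn1 hn2
      (fun _ _ h1 h2 => add_unit h1 h2)
  -- Step 5: conclude
  have hsum : g₁ + g₂ = mkB K ((2*(z₁+z₂)).map (Int.castRingHom ℚ)) := by
    rw [hz1, hz2, ← map_add, ← Polynomial.map_add]
    congr 2
    ring
  rw [transl (z₁+z₂) (g₁+g₂) (c-1) hsum, map_add]
  exact key
end
end

section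
/- Doubling lemma: let g ∈ ℚ[χ]/⟨1+χ+⋯+χ^{2^{K+1}-1}⟩ be such that its projection to ℚ[χ]/⟨1+χ^{2^K}⟩ lies in 4·ℤ[χ]/⟨1+χ^{2^K}⟩. Then the image of g in ℚ[χ]/⟨1+χ+⋯+χ^{2^K-1}⟩ lies in 4·ℤ[χ]/⟨1+χ+⋯+χ^{2^K-1}⟩ if and only if 2g lies in 4·ℤ[χ]/⟨1+χ+⋯+χ^{2^{K+1}-1}⟩. -/
open Polynomial

/-- Doubling lemma: for g in ℚ[χ]/⟨1+χ+⋯+χ^{2^{K+1}-1}⟩ (represented by p) whose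
projection to ℚ[χ]/⟨1+χ^{2^K}⟩ lies in 4·ℤ[χ], the image of g in
ℚ[χ]/⟨1+χ+⋯+χ^{2^K-1}⟩ lies in 4·ℤ[χ] iff 2g lies in 4·ℤ[χ] in
ℚ[χ]/⟨1+χ+⋯+χ^{2^{K+1}-1}⟩. -/
theorem stmt19 (K : ℕ) (hK : 1 ≤ K) (p : Polynomial ℚ)
    (hS : ∃ z : Polynomial ℤ,
      Ideal.Quotient.mk (Ideal.span {(1 + X ^ (2 ^ K) : Polynomial ℚ)}) p =
        Ideal.Quotient.mk (Ideal.span {(1 + X ^ (2 ^ K) : Polynomial ℚ)})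
          (4 * z.map (Int.castRingHom ℚ))) :
    ((∃ z : Polynomial ℤ,
        Ideal.Quotient.mk
            (Ideal.span {(∑ i ∈ Finset.range (2 ^ K), X ^ i : Polynomial ℚ)}) p =
          Ideal.Quotient.mk
            (Ideal.span {(∑ i ∈ Finset.range (2 ^ K), X ^ i : Polynomial ℚ)})
            (4 * z.map (Int.castRingHom ℚ))) ↔
      (∃ z : Polynomial ℤ,
        Ideal.Quotient.mk
            (Ideal.span {(∑ i ∈ Finset.range (2 ^ (K + 1)), X ^ i : Polynomial ℚ)}) (2 * p) =
          Ideal.Quotient.mk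
            (Ideal.span {(∑ i ∈ Finset.range (2 ^ (K + 1)), X ^ i : Polynomial ℚ)})
            (4 * z.map (Int.castRingHom ℚ)))) := by
  have hinj : Function.Injective (Int.castRingHom ℚ) := Int.cast_injective
  set n := 2 ^ K with hn
  have hnne : n ≠ 0 := (pow_pos two_pos K).ne'
  -- divide-by-2 and divide-by-4 helpers
  have hdiv2 : ∀ a r : ℚ[X], a ∣ 2 * r → a ∣ r := by
    intro a r h
    have h2 := h.mul_left (C (2⁻¹:ℚ))
    rwa [show C (2⁻¹:ℚ) * (2*r) = r by
      rw [(map_ofNat C 2).symm, ← mul_assoc, ← C_mul]; norm_num] at h2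
  have hdiv4 : ∀ a r : ℚ[X], a ∣ 4 * r → a ∣ r := by
    intro a r h
    have h2 := h.mul_left (C ((4:ℚ)⁻¹))
    rwa [show C ((4:ℚ)⁻¹) * (4*r) = r by
      rw [(map_ofNat C 4).symm, ← mul_assoc, ← C_mul]; norm_num] at h2
  have hΨmap : ((1 + X^n : ℤ[X]).map (Int.castRingHom ℚ)) = (1 + X^n : ℚ[X]) := by
    simp
  have hg : (∑ i ∈ Finset.range n, (X:ℚ[X])^i) * (X - 1) = X^n - 1 := geom_sum_mul _ _
  have hΦdvd : (∑ i ∈ Finset.range n, (X:ℚ[X])^i) ∣ ((1 + X^n : ℚ[X]) - 2) :=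
    ⟨X - 1, by linear_combination -hg⟩
  have hX1 : (X - 1 : ℚ[X]) ≠ 0 := by
    have := Polynomial.X_sub_C_ne_zero (1:ℚ); simpa using this
  have h2n : 2 ^ (K+1) = n + n := by rw [hn]; ring
  have hgT : (∑ i ∈ Finset.range (2^(K+1)), (X:ℚ[X])^i) * (X - 1) = X^(2^(K+1)) - 1 :=
    geom_sum_mul _ _
  have hfac : (∑ i ∈ Finset.range (2^(K+1)), (X:ℚ[X])^i)
      = (∑ i ∈ Finset.range n, (X:ℚ[X])^i) * (1 + X^n) := by
    refine mul_right_cancel₀ hX1 ?_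
    rw [hgT, show (X:ℚ[X])^(2^(K+1)) = X^n * X^n by rw [h2n, pow_add]]
    linear_combination (-(1:ℚ[X]) - X^n) * hg
  obtain ⟨z₀, hz₀⟩ := hS
  rw [Ideal.Quotient.eq, Ideal.mem_span_singleton] at hz₀
  obtain ⟨q, hq⟩ := hz₀
  constructor
  · rintro ⟨z₁, hz₁⟩
    rw [Ideal.Quotient.eq, Ideal.mem_span_singleton] at hz₁
    refine ⟨2*z₀ + (1 + X^n) * (z₁ - z₀), ?_⟩
    rw [Ideal.Quotient.eq, Ideal.mem_span_singleton, hfac]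
    have key : (∑ i ∈ Finset.range n, (X:ℚ[X])^i) ∣
        2*q - 4*((z₁.map (Int.castRingHom ℚ)) - (z₀.map (Int.castRingHom ℚ))) := by
      have h1 := hz₁.sub (hΦdvd.mul_right q)
      rwa [show (p - 4 * z₁.map (Int.castRingHom ℚ)) - ((1 + X^n : ℚ[X]) - 2)*q
          = 2*q - 4*((z₁.map (Int.castRingHom ℚ)) - (z₀.map (Int.castRingHom ℚ))) by
        linear_combination hq] at h1
    obtain ⟨r, hr⟩ := key
    refine ⟨r, ?_⟩
    have hm : ((2*z₀ + (1 + X^n) * (z₁ - z₀) : ℤ[X]).map (Int.castRingHom ℚ))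
        = 2 * z₀.map (Int.castRingHom ℚ)
          + (1 + X^n) * (z₁.map (Int.castRingHom ℚ) - z₀.map (Int.castRingHom ℚ)) := by
      simp [Polynomial.map_add, Polynomial.map_mul, Polynomial.map_sub, Polynomial.map_pow,
        Polynomial.map_ofNat]
    rw [hm]
    linear_combination 2*hq + ((1:ℚ[X]) + X^n) * hr
  · rintro ⟨z₂, hz₂⟩
    rw [Ideal.Quotient.eq, Ideal.mem_span_singleton, hfac] at hz₂
    have hΨd : (1 + X^n : ℚ[X]) ∣ 2*p - 4 * z₂.map (Int.castRingHom ℚ) :=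
      dvd_trans (dvd_mul_left _ _) hz₂
    have hΦd : (∑ i ∈ Finset.range n, (X:ℚ[X])^i) ∣ 2*p - 4 * z₂.map (Int.castRingHom ℚ) :=
      dvd_trans (dvd_mul_right _ _) hz₂
    have hΨq : (1 + X^n : ℚ[X]) ∣ p - 4 * z₀.map (Int.castRingHom ℚ) := ⟨q, hq⟩
    have h4' : (1 + X^n : ℚ[X]) ∣ 4 * ((z₂ - 2*z₀).map (Int.castRingHom ℚ)) := by
      have h := (hΨq.mul_left 2).sub hΨd
      rwa [show 2*(p - 4 * z₀.map (Int.castRingHom ℚ)) - (2*p - 4 * z₂.map (Int.castRingHom ℚ))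
          = 4 * ((z₂ - 2*z₀).map (Int.castRingHom ℚ)) by
        simp only [Polynomial.map_sub, Polynomial.map_mul, Polynomial.map_ofNat]
        ring] at h
    have hZdvd : (1 + X^n : ℤ[X]) ∣ z₂ - 2*z₀ := by
      have h := hdiv4 _ _ h4'
      rw [← hΨmap] at h
      exact (Polynomial.map_dvd_map _ hinj (by rw [add_comm]; exact monic_X_pow_add_C 1 hnne)).mp h
    obtain ⟨u, hu⟩ := hZdvd
    have HU : (z₂.map (Int.castRingHom ℚ)) - 2 * z₀.map (Int.castRingHom ℚ)
        = (1 + X^n) * u.map (Int.castRingHom ℚ) := by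
      have := congrArg (Polynomial.map (Int.castRingHom ℚ)) hu
      simpa [Polynomial.map_sub, Polynomial.map_mul, Polynomial.map_add, Polynomial.map_pow,
        Polynomial.map_ofNat] using this
    refine ⟨z₀ + u, ?_⟩
    rw [Ideal.Quotient.eq, Ideal.mem_span_singleton]
    have key : (∑ i ∈ Finset.range n, (X:ℚ[X])^i) ∣
        2 * (2*q - 4 * u.map (Int.castRingHom ℚ)) := by
      have h := hΦd.sub (hΦdvd.mul_right (2*q - 4 * u.map (Int.castRingHom ℚ)))
      rwa [show (2*p - 4 * z₂.map (Int.castRingHom ℚ))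
          - ((1 + X^n : ℚ[X]) - 2) * (2*q - 4 * u.map (Int.castRingHom ℚ))
          = 2 * (2*q - 4 * u.map (Int.castRingHom ℚ)) by
        linear_combination 2*hq - 4*HU] at h
    have key2 := hdiv2 _ _ key
    have h := (hΦdvd.mul_right q).add key2
    rwa [show ((1 + X^n : ℚ[X]) - 2) * q + (2*q - 4 * u.map (Int.castRingHom ℚ))
        = p - 4 * ((z₀ + u).map (Int.castRingHom ℚ)) by
      simp only [Polynomial.map_add]
      linear_combination -hq] at h
end
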